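/- arXiv:1909.06315 — 4 statements merged into one kernel-verified Lean document; each statement's English description precedes it below -/
import Mathlib

section
/- Let {φ_e}_{e∈E} be a conformal iterated function system in ℝⁿ with limit set J, and assume X ∖ closure(⋃_{e∈E} φ_e(X)) ≠ ∅. Then for every nonempty finite word ω over E, J is porous at the unique fixed point x_ω of φ_ω (the unique point with φ_ω(x_ω) = x_ω, equivalently {x_ω} = ⋂_{n≥1} φ_ω^n(X)), and the set { x_ω : ω a nonempty finite word over E } is dense in J; in particular J is porous at every point of a dense subset of J. -/
open Metric Set Filter

/-- `por A x r` is the porosity of the set `A` at the point `x` at scale `r`: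
the supremum of all `c ≥ 0` such that some open ball of radius `c·r` is contained
in `B(x,r) ∖ A`. -/
noncomputable def por {X : Type*} [MetricSpace X] (A : Set X) (x : X) (r : ℝ) : ℝ :=
  sSup {c : ℝ | 0 ≤ c ∧ ∃ y : X, Metric.ball y (c * r) ⊆ Metric.ball x r \ A}

/-- `A` is porous at the point `x`. -/
def PorousAt {X : Type*} [MetricSpace X] (A : Set X) (x : X) : Prop :=
  ∃ c ∈ Set.Ioo (0 : ℝ) 1, ∃ r₀ > (0 : ℝ), ∀ r ∈ Set.Ioo (0 : ℝ) r₀, c ≤ por A x r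

/-- `A` is porous. -/
def Porous {X : Type*} [MetricSpace X] (A : Set X) : Prop :=
  ∃ c ∈ Set.Ioo (0 : ℝ) 1, ∃ r₀ > (0 : ℝ), ∀ x ∈ A, ∀ r ∈ Set.Ioo (0 : ℝ) r₀, c ≤ por A x r

/-- A conformal iterated function system in `ℝⁿ` (single-vertex conformal GDMS):
a compact connected set `X` equal to the closure of its interior, an open connected
set `W ⊇ X`, and injective `C¹` maps `φ e : W → W` with conformal (invertibly similar)
derivatives `D e`, mapping `X` into `X`, with Lipschitz constant at most `s ∈ (0,1)`
on `W`, satisfying the Open Set Condition. -/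
structure CIFS (n : ℕ) (E : Type*) where
  X : Set (EuclideanSpace ℝ (Fin n))
  W : Set (EuclideanSpace ℝ (Fin n))
  φ : E → EuclideanSpace ℝ (Fin n) → EuclideanSpace ℝ (Fin n)
  D : E → EuclideanSpace ℝ (Fin n) → EuclideanSpace ℝ (Fin n) →L[ℝ] EuclideanSpace ℝ (Fin n)
  s : ℝ
  hs : s ∈ Set.Ioo (0 : ℝ) 1
  hXcompact : IsCompact X
  hXconn : IsConnected X
  hXreg : X = closure (interior X)
  hWopen : IsOpen W
  hWconn : IsConnected W
  hXW : X ⊆ W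
  hInj : ∀ e, Set.InjOn (φ e) W
  hMapsW : ∀ e, Set.MapsTo (φ e) W W
  hMapsX : ∀ e, Set.MapsTo (φ e) X X
  hDeriv : ∀ e, ∀ x ∈ W, HasFDerivAt (φ e) (D e x) x
  hConf : ∀ e, ∀ x ∈ W, IsConformalMap (D e x)
  hLip : ∀ e, LipschitzOnWith s.toNNReal (φ e) W
  hOSC : ∀ a b : E, a ≠ b → Disjoint (φ a '' interior X) (φ b '' interior X)

namespace CIFS

variable {n : ℕ} {E : Type*}

/-- The composition `φ_ω = φ_{ω₁} ∘ ⋯ ∘ φ_{ωₙ}` associated to a finite word `ω`. -/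
def compWord (S : CIFS n E) (ω : List E) :
    EuclideanSpace ℝ (Fin n) → EuclideanSpace ℝ (Fin n) :=
  ω.foldr (fun e g => S.φ e ∘ g) id

/-- The derivative of `φ_ω` at a point, computed by the chain rule. -/
noncomputable def derivWord (S : CIFS n E) :
    List E → EuclideanSpace ℝ (Fin n) →
      (EuclideanSpace ℝ (Fin n) →L[ℝ] EuclideanSpace ℝ (Fin n))
  | [], _ => ContinuousLinearMap.id ℝ _
  | e :: ω, x => (S.D e (S.compWord ω x)).comp (S.derivWord ω x)

/-- The Bounded Distortion Property: there is `K ≥ 1` such that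
`‖Dφ_ω(p)‖ ≤ K·‖Dφ_ω(q)‖` for every nonempty word `ω` and all `p, q ∈ W`. -/
def BDP (S : CIFS n E) : Prop :=
  ∃ K : ℝ, 1 ≤ K ∧ ∀ ω : List E, ω ≠ [] → ∀ p ∈ S.W, ∀ q ∈ S.W,
    ‖S.derivWord ω p‖ ≤ K * ‖S.derivWord ω q‖

end CIFS

/-!
Fix a ball `B` in the interior of `X` that misses every `φ_e(X)`. By the Open Set Condition,
`φ_α(B)` misses every cylinder `φ_β(X)` with `β` longer than `α`, hence misses `J`. If
`φ_ω(x) = x` and `λ = ‖Dφ_ω(x)‖ < 1`, the holes `φ_{ω^k}(B)` lie within distance `≲ λ^k` of `x`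
(mean value theorem along chains in the connected set `W`, with bounded distortion) and contain
balls of radius `≳ λ^k` (a Koebe-type estimate obtained from the local inverse of `φ_{ω^k}`, whose
derivative is controlled by conformality and bounded distortion); this is porosity at `x`.
Density: the fixed point of `φ_{τ₀ … τₘ}` lies in the cylinder of `π τ`, whose diameter is at most
`s ^ (m + 1) · diam X`.
-/

open Topology

theorem IsCompact.continuousOn_invFunOn {α β : Type*} [TopologicalSpace α] [Nonempty α]
    [TopologicalSpace β] [T2Space β] {f : α → β} {K : Set α} (hK : IsCompact K)
    (hf : ContinuousOn f K) (hinj : InjOn f K) : ContinuousOn (Function.invFunOn f K) (f '' K) := by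
  refine continuousOn_iff_isClosed.2 fun C hC => ⟨f '' (K ∩ C), ?_, ?_⟩
  · exact ((hK.inter_right hC).image_of_continuousOn (hf.mono inter_subset_left)).isClosed
  · ext y
    constructor
    · rintro ⟨hyC, x, hxK, rfl⟩
      refine ⟨⟨Function.invFunOn f K (f x), ⟨Function.invFunOn_mem ⟨x, hxK, rfl⟩, hyC⟩,
        Function.invFunOn_eq ⟨x, hxK, rfl⟩⟩, x, hxK, rfl⟩
    · rintro ⟨⟨x, ⟨hxK, hxC⟩, rfl⟩, -⟩
      exact ⟨by rwa [mem_preimage, hinj.leftInvOn_invFunOn hxK], x, hxK, rfl⟩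

theorem exists_ball_subset_interior_disjoint {α : Type*} [PseudoMetricSpace α] {X Y : Set α}
    (hX : X = closure (interior X)) (h : (X \ closure Y).Nonempty) :
    ∃ z R, 0 < R ∧ ball z R ⊆ interior X ∧ Disjoint (ball z R) Y := by
  obtain ⟨p, hpX, hpY⟩ := h
  rw [hX] at hpX
  obtain ⟨z, hzY, hzX⟩ := mem_closure_iff_nhds.1 hpX _ (isClosed_closure.isOpen_compl.mem_nhds hpY)
  obtain ⟨R, hR, hRz⟩ := Metric.isOpen_iff.1 (isOpen_interior.inter isClosed_closure.isOpen_compl)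
    z ⟨hzX, hzY⟩
  exact ⟨z, R, hR, fun w hw => (hRz hw).1,
    disjoint_left.2 fun w hw hwY => (hRz hw).2 (subset_closure hwY)⟩

section Analysis

variable {V : Type*} [NormedAddCommGroup V] [InnerProductSpace ℝ V]

theorem eq_of_isLocalMin_norm_sub {G : Type*} [NormedAddCommGroup G] [NormedSpace ℝ G]
    {F : G → V} {F' : G →L[ℝ] V} {w : G} {y : V}
    (hF : HasFDerivAt F F' w) (hF' : Function.Surjective F')
    (hmin : IsLocalMin (fun x => ‖F x - y‖) w) : F w = y := by
  have hmin2 : IsLocalMin (fun x => ‖F x - y‖ ^ 2) w := by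
    filter_upwards [hmin] with x hx using pow_le_pow_left₀ (norm_nonneg _) hx 2
  obtain ⟨v, hv⟩ := hF' (F w - y)
  have := congrArg (fun L : G →L[ℝ] ℝ => L v) (hmin2.hasFDerivAt_eq_zero (hF.sub_const y).norm_sq)
  simp only [FunLike.coe_smul, ContinuousLinearMap.coe_comp, Pi.smul_apply,
    Function.comp_apply, innerSL_apply_apply, hv, zero_apply, smul_eq_zero,
    inner_self_eq_zero, sub_eq_zero] at this
  exact this.resolve_left two_ne_zero

variable [FiniteDimensional ℝ V]

/-- The preimage of a value close to `F p` is found by minimising the distance to it over a small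
closed ball around `p`. -/
theorem isOpen_image_of_hasFDerivAt_injective {F : V → V} {F' : V → V →L[ℝ] V} {U : Set V}
    (hU : IsOpen U) (hF : ∀ x ∈ U, HasFDerivAt F (F' x) x)
    (hF' : ∀ x ∈ U, Function.Injective (F' x)) (hinj : InjOn F U) : IsOpen (F '' U) := by
  rw [Metric.isOpen_iff]
  rintro _ ⟨p, hpU, rfl⟩
  obtain ⟨t, ht, htU⟩ := Metric.nhds_basis_closedBall.mem_iff.1 (hU.mem_nhds hpU)
  have hcont : ContinuousOn F (closedBall p t) := fun x hx =>
    (hF x (htU hx)).continuousAt.continuousWithinAt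
  obtain ⟨m, hm, hmle⟩ := (isCompact_sphere p t).exists_forall_le'
    (f := fun x => ‖F x - F p‖) ((hcont.mono sphere_subset_closedBall).sub continuousOn_const).norm
    (a := 0) fun w hw => norm_sub_pos_iff.2 fun h =>
      (ne_of_mem_sphere hw ht.ne').symm
        (hinj (htU (sphere_subset_closedBall hw)) (htU (mem_closedBall_self ht.le)) h).symm
  refine ⟨m / 2, half_pos hm, fun y hy => ?_⟩
  rw [mem_ball, dist_eq_norm'] at hy
  obtain ⟨w, hw, hwmin⟩ := (isCompact_closedBall p t).exists_isMinOn
    (nonempty_closedBall.2 ht.le) (hcont.sub continuousOn_const).norm (f := fun x => ‖F x - y‖)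
  have hw_ball : w ∈ ball p t := by
    refine lt_of_le_of_ne (mem_closedBall.1 hw) fun hwt => ?_
    have hsphere := hmle w (mem_sphere.2 hwt)
    have hle_center : ‖F w - y‖ ≤ ‖F p - y‖ := hwmin (mem_closedBall_self ht.le)
    have htri := norm_sub_le_norm_sub_add_norm_sub (F w) y (F p)
    rw [norm_sub_rev y] at htri
    linarith
  have hwU := htU (ball_subset_closedBall hw_ball)
  refine ⟨w, htU hw, eq_of_isLocalMin_norm_sub (hF w hwU) ?_ ?_⟩
  · exact LinearMap.injective_iff_surjective.1 (hF' w hwU)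
  · exact hwmin.isLocalMin (closedBall_mem_nhds_of_mem hw_ball)

end Analysis

theorem ContinuousLinearMap.injective_of_mul_norm_le {V W : Type*} [NormedAddCommGroup V]
    [NormedSpace ℝ V] [NormedAddCommGroup W] [NormedSpace ℝ W] {A : V →L[ℝ] W} {c : ℝ}
    (hc : 0 < c) (hA : ∀ v, c * ‖v‖ ≤ ‖A v‖) : Function.Injective A :=
  (injective_iff_map_eq_zero A).2 fun v hv => by
    have := hA v
    rw [hv, norm_zero] at this
    exact norm_le_zero_iff.1 (nonpos_of_mul_nonpos_right this hc)

theorem exists_continuousLinearEquiv_of_mul_norm_le {V : Type*} [NormedAddCommGroup V]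
    [NormedSpace ℝ V] [FiniteDimensional ℝ V] {A : V →L[ℝ] V} {c : ℝ} (hc : 0 < c)
    (hA : ∀ v, c * ‖v‖ ≤ ‖A v‖) :
    ∃ A' : V ≃L[ℝ] V, (A' : V →L[ℝ] V) = A ∧ ‖(A'.symm : V →L[ℝ] V)‖ ≤ c⁻¹ := by
  set A' := (LinearEquiv.ofInjectiveEndo A.toLinearMap
    (A.injective_of_mul_norm_le hc hA)).toContinuousLinearEquiv
  refine ⟨A', rfl, ContinuousLinearMap.opNorm_le_bound _ (by positivity) fun u => ?_⟩
  rw [← div_eq_inv_mul, le_div_iff₀' hc]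
  calc c * ‖A'.symm u‖ ≤ ‖A (A'.symm u)‖ := hA _
    _ = ‖u‖ := congrArg norm (A'.apply_symm_apply u)

/-- If the segment left `U`, the piece of it before the first exit would lie in `C`, and so would
the exit point, by closedness. -/
theorem segment_subset_of_convex_subset {V : Type*} [NormedAddCommGroup V] [NormedSpace ℝ V]
    {U C : Set V} (hU : IsOpen U) (hC : IsClosed C) (hCU : C ⊆ U) {y p : V} (hy : y ∈ U)
    (h : ∀ s : Set V, Convex ℝ s → y ∈ s → s ⊆ segment ℝ y p → s ⊆ U → s ⊆ C) :
    segment ℝ y p ⊆ C := by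
  refine h _ (convex_segment y p) (left_mem_segment ℝ y p) subset_rfl ?_
  by_contra hsub
  set γ := AffineMap.lineMap (k := ℝ) y p
  set T := Icc (0 : ℝ) 1 ∩ γ ⁻¹' Uᶜ
  have hT : T.Nonempty := by
    rw [segment_eq_image_lineMap, image_subset_iff] at hsub
    exact not_subset.1 hsub
  have hTc : IsClosed T :=
    isClosed_Icc.inter (hU.isClosed_compl.preimage AffineMap.lineMap_continuous)
  have hTb : BddBelow T := ⟨0, fun τ hτ => hτ.1.1⟩
  set τ₀ := sInf T
  have hτ₀ : τ₀ ∈ T := hTc.csInf_mem hT hTb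
  have hτ₀pos : 0 < τ₀ := by
    refine lt_of_le_of_ne hτ₀.1.1 fun h0 => hτ₀.2 ?_
    simpa [← h0, γ] using hy
  have hsC : γ '' Ico 0 τ₀ ⊆ C := by
    refine h _ ((convex_Ico 0 τ₀).affine_image γ) ⟨0, ⟨le_rfl, hτ₀pos⟩, by simp [γ]⟩ ?_ ?_
    · rw [segment_eq_image_lineMap]
      exact image_mono fun τ hτ => ⟨hτ.1, hτ.2.le.trans hτ₀.1.2⟩
    · rintro _ ⟨τ, hτ, rfl⟩
      by_contra hτU
      exact (csInf_le hTb ⟨⟨hτ.1, hτ.2.le.trans hτ₀.1.2⟩, hτU⟩).not_gt hτ.2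
  have hγτ₀ : γ τ₀ ∈ closure (γ '' Ico 0 τ₀) :=
    image_closure_subset_closure_image AffineMap.lineMap_continuous
      ⟨τ₀, by rw [closure_Ico hτ₀pos.ne]; exact ⟨hτ₀.1.1, le_rfl⟩, rfl⟩
  exact hτ₀.2 (hCU (hC.closure_subset_iff.2 hsC hγτ₀))

section InverseFunction

variable {V : Type*} [NormedAddCommGroup V] [InnerProductSpace ℝ V] [FiniteDimensional ℝ V]
  {F : V → V} {F' : V → V →L[ℝ] V} {z : V} {c R : ℝ}

/-- The inverse is continuous because `closedBall z R` is compact, hence differentiable with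
derivative `(F' x)⁻¹` of norm at most `c⁻¹`, hence `c⁻¹`-Lipschitz on convex sets. -/
theorem exists_inverse_lipschitz_on_convex (hc : 0 < c)
    (hF : ∀ x ∈ closedBall z R, HasFDerivAt F (F' x) x)
    (hF' : ∀ x ∈ closedBall z R, ∀ v, c * ‖v‖ ≤ ‖F' x v‖) (hinj : InjOn F (closedBall z R))
    (hU : IsOpen (F '' ball z R)) :
    ∃ g : V → V, LeftInvOn g F (closedBall z R) ∧ RightInvOn g F (F '' ball z R) ∧
      ∀ s, Convex ℝ s → s ⊆ F '' ball z R → ∀ a ∈ s, ∀ b ∈ s, ‖g b - g a‖ ≤ c⁻¹ * ‖b - a‖ := by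
  set g := Function.invFunOn F (closedBall z R)
  have hgc : ContinuousOn g (F '' closedBall z R) :=
    (isCompact_closedBall z R).continuousOn_invFunOn
      (fun x hx => (hF x hx).continuousAt.continuousWithinAt) hinj
  have hgF : LeftInvOn g F (closedBall z R) := hinj.leftInvOn_invFunOn
  have hFg : ∀ q ∈ F '' ball z R, F (g q) = q ∧ g q ∈ ball z R := by
    rintro _ ⟨w, hw, rfl⟩
    rw [hgF (ball_subset_closedBall hw)]
    exact ⟨rfl, hw⟩
  have hg' : ∀ q ∈ F '' ball z R, ∃ G : V →L[ℝ] V, HasFDerivAt g G q ∧ ‖G‖ ≤ c⁻¹ := by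
    intro q hq
    have hgq := ball_subset_closedBall (hFg q hq).2
    obtain ⟨A, hA, hAn⟩ := exists_continuousLinearEquiv_of_mul_norm_le hc (hF' _ hgq)
    refine ⟨A.symm, HasFDerivAt.of_local_left_inverse (f := F) ?_ (hA ▸ hF _ hgq) ?_, hAn⟩
    · exact (hgc q (image_mono ball_subset_closedBall hq)).continuousAt
        (mem_of_superset (hU.mem_nhds hq) (image_mono ball_subset_closedBall))
    · filter_upwards [hU.mem_nhds hq] with q' hq' using (hFg q' hq').1
  choose! G hG hGn using hg'
  refine ⟨g, hgF, fun q hq => (hFg q hq).1, fun s hs hsU a ha b hb => ?_⟩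
  exact hs.norm_image_sub_le_of_norm_hasFDerivWithin_le
    (fun x hx => (hG x (hsU hx)).hasFDerivWithinAt) (fun x hx => hGn x (hsU hx)) ha hb

/-- A Koebe-type estimate: the ray from `F z` to a point of `ball (F z) (c * r)` is lifted by the
`c⁻¹`-Lipschitz local inverse into `closedBall z r`. -/
theorem ball_subset_image_closedBall_of_mul_norm_le {r : ℝ} (hc : 0 < c) (hrR : r < R)
    (hF : ∀ x ∈ closedBall z R, HasFDerivAt F (F' x) x)
    (hF' : ∀ x ∈ closedBall z R, ∀ v, c * ‖v‖ ≤ ‖F' x v‖) (hinj : InjOn F (closedBall z R)) :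
    ball (F z) (c * r) ⊆ F '' closedBall z r := by
  have hU : IsOpen (F '' ball z R) :=
    isOpen_image_of_hasFDerivAt_injective isOpen_ball
      (fun x hx => hF x (ball_subset_closedBall hx))
      (fun x hx => (F' x).injective_of_mul_norm_le hc (hF' x (ball_subset_closedBall hx)))
      (hinj.mono ball_subset_closedBall)
  obtain ⟨g, hgF, hFg, hlip⟩ := exists_inverse_lipschitz_on_convex hc hF hF' hinj hU
  intro p hp
  have hzR : z ∈ ball z R :=
    mem_ball_self ((pos_of_mul_pos_right (dist_nonneg.trans_lt hp) hc.le).trans hrR)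
  set r' := c⁻¹ * ‖p - F z‖
  have hr' : r' < r := by
    rw [mem_ball, dist_eq_norm] at hp
    rwa [inv_mul_lt_iff₀ hc]
  have hC : F '' closedBall z r' ⊆ F '' ball z R :=
    image_mono (closedBall_subset_ball (hr'.trans hrR))
  have hCc : IsClosed (F '' closedBall z r') :=
    ((isCompact_closedBall z r').image_of_continuousOn fun x hx =>
      (hF x (closedBall_subset_closedBall (hr'.trans hrR).le hx)).continuousAt.continuousWithinAt
      ).isClosed
  have hseg := segment_subset_of_convex_subset hU hCc hC (mem_image_of_mem F hzR) (p := p)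
    fun s hs hys hsp hsU q hq => by
    refine ⟨g q, ?_, hFg (hsU hq)⟩
    rw [mem_closedBall, dist_eq_norm, ← hgF (ball_subset_closedBall hzR)]
    refine (hlip s hs hsU _ hys q hq).trans (mul_le_mul_of_nonneg_left ?_ (by positivity))
    simpa [dist_eq_norm] using (convex_closedBall (F z) ‖p - F z‖).segment_subset
      (mem_closedBall_self (norm_nonneg _)) (by simp [dist_eq_norm]) (hsp hq)
  exact image_mono (closedBall_subset_closedBall hr'.le) (hseg (right_mem_segment ℝ _ _))

end InverseFunction

section Porosity

variable {V : Type*} [NormedAddCommGroup V] [NormedSpace ℝ V] [Nontrivial V]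

theorem le_por_of_ball_subset {A : Set V} {x y : V} {c r : ℝ} (hc : 0 ≤ c) (hr : 0 < r)
    (h : ball y (c * r) ⊆ ball x r \ A) : c ≤ por A x r := by
  refine le_csSup ⟨1, fun c' ⟨hc', y', hy'⟩ => ?_⟩ ⟨hc, y, h⟩
  have := diam_mono (hy'.trans sdiff_subset) isBounded_ball
  rw [diam_ball_eq y' (by positivity), diam_ball_eq x hr.le] at this
  nlinarith

/-- A scale `r` is sandwiched between two consecutive powers of `l`; the smaller one supplies the
hole. -/
theorem porousAt_of_geometric_holes {A : Set V} {x : V} {l a b : ℝ} (hl0 : 0 < l) (hl1 : l < 1)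
    (ha : 0 ≤ a) (hb : 0 < b) (y : ℕ → V) (hy : ∀ k, dist (y k) x ≤ a * l ^ k)
    (hA : ∀ k, Disjoint (ball (y k) (b * l ^ k)) A) : PorousAt A x := by
  have hab : 0 < a + b := by positivity
  refine ⟨b * l / (a + b), ⟨by positivity, ?_⟩, a + b, hab, fun r ⟨hr, hrab⟩ => ?_⟩
  · rw [div_lt_one hab]
    nlinarith
  obtain ⟨k, hk1, hk⟩ := exists_nat_pow_near_of_lt_one (div_pos hr hab)
    ((div_le_one hab).2 hrab.le) hl0 hl1
  rw [lt_div_iff₀ hab] at hk1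
  rw [div_le_iff₀ hab] at hk
  refine le_por_of_ball_subset (y := y (k + 1)) (by positivity) hr fun w hw => ?_
  have hw' : w ∈ ball (y (k + 1)) (b * l ^ (k + 1)) := by
    refine mem_ball.2 ((mem_ball.1 hw).trans_le ?_)
    calc b * l / (a + b) * r ≤ b * l / (a + b) * (l ^ k * (a + b)) := by gcongr
      _ = b * l ^ (k + 1) := by field_simp; ring
  refine ⟨?_, (hA (k + 1)).notMem_of_mem_left hw'⟩
  have := dist_triangle w (y (k + 1)) x
  rw [mem_ball] at hw' ⊢
  nlinarith [hy (k + 1)]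

end Porosity

section Conformal

variable {V : Type*} [NormedAddCommGroup V] [NormedSpace ℝ V] [Nontrivial V]

theorem IsConformalMap.norm_map {A : V →L[ℝ] V} (hA : IsConformalMap A) (v : V) :
    ‖A v‖ = ‖A‖ * ‖v‖ := by
  obtain ⟨c, -, li, rfl⟩ := hA
  simp [norm_smul]

theorem IsConformalMap.norm_comp {A B : V →L[ℝ] V} (hA : IsConformalMap A)
    (hB : IsConformalMap B) : ‖A.comp B‖ = ‖A‖ * ‖B‖ := by
  obtain ⟨v, hv⟩ := exists_ne (0 : V)
  have := (hA.comp hB).norm_map v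
  rw [ContinuousLinearMap.comp_apply, hA.norm_map, hB.norm_map, ← mul_assoc] at this
  exact (mul_right_cancel₀ (norm_ne_zero_iff.2 hv) this).symm

end Conformal

namespace CIFS

variable {n : ℕ} {E : Type*} (S : CIFS n E)

theorem compWord_cons (e : E) (α : List E) : S.compWord (e :: α) = S.φ e ∘ S.compWord α := rfl

theorem compWord_append (α β : List E) :
    S.compWord (α ++ β) = S.compWord α ∘ S.compWord β := by
  induction α with
  | nil => rfl
  | cons e α ih => exact congrArg (S.φ e ∘ ·) ih

theorem compWord_flatten_replicate_apply {ω : List E} {x : EuclideanSpace ℝ (Fin n)}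
    (hx : S.compWord ω x = x) (k : ℕ) : S.compWord (List.replicate k ω).flatten x = x := by
  induction k with
  | zero => rfl
  | succ k ih =>
    rw [List.replicate_succ, List.flatten_cons, compWord_append, Function.comp_apply, ih, hx]

theorem mapsTo_compWord_W (α : List E) : MapsTo (S.compWord α) S.W S.W := by
  induction α with
  | nil => exact mapsTo_id _
  | cons e α ih => exact (S.hMapsW e).comp ih

theorem mapsTo_compWord_X (α : List E) : MapsTo (S.compWord α) S.X S.X := by
  induction α with
  | nil => exact mapsTo_id _
  | cons e α ih => exact (S.hMapsX e).comp ih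

theorem injOn_compWord (α : List E) : InjOn (S.compWord α) S.W := by
  induction α with
  | nil => exact injOn_id _
  | cons e α ih => exact (S.hInj e).comp ih (S.mapsTo_compWord_W α)

theorem hasFDerivAt_compWord (α : List E) {p : EuclideanSpace ℝ (Fin n)} (hp : p ∈ S.W) :
    HasFDerivAt (S.compWord α) (S.derivWord α p) p := by
  induction α with
  | nil => exact hasFDerivAt_id p
  | cons e α ih => exact (S.hDeriv e _ (S.mapsTo_compWord_W α hp)).comp p ih

theorem isConformalMap_derivWord (α : List E) {p : EuclideanSpace ℝ (Fin n)} (hp : p ∈ S.W) :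
    IsConformalMap (S.derivWord α p) := by
  induction α with
  | nil => exact isConformalMap_id
  | cons e α ih => exact (S.hConf e _ (S.mapsTo_compWord_W α hp)).comp ih

theorem derivWord_append (α β : List E) (p : EuclideanSpace ℝ (Fin n)) :
    S.derivWord (α ++ β) p = (S.derivWord α (S.compWord β p)).comp (S.derivWord β p) := by
  induction α with
  | nil => rfl
  | cons e α ih =>
    simp only [List.cons_append, derivWord, ih, compWord_append, Function.comp_apply]
    rfl

theorem lipschitzOnWith_compWord (α : List E) :
    LipschitzOnWith (S.s.toNNReal ^ α.length) (S.compWord α) S.W := by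
  induction α with
  | nil => simpa using LipschitzWith.id.lipschitzOnWith (f := S.compWord []) (s := S.W)
  | cons e α ih =>
    rw [List.length_cons, pow_succ']
    exact (S.hLip e).comp ih (S.mapsTo_compWord_W α)

theorem norm_derivWord_le (α : List E) {p : EuclideanSpace ℝ (Fin n)} (hp : p ∈ S.W) :
    ‖S.derivWord α p‖ ≤ S.s ^ α.length := by
  simpa [Real.coe_toNNReal _ S.hs.1.le] using (S.hasFDerivAt_compWord α hp).le_of_lipschitzOn
    (S.hWopen.mem_nhds hp) (S.lipschitzOnWith_compWord α)

theorem isOpen_image_compWord (α : List E) {U : Set (EuclideanSpace ℝ (Fin n))} (hU : IsOpen U)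
    (hUW : U ⊆ S.W) : IsOpen (S.compWord α '' U) :=
  isOpen_image_of_hasFDerivAt_injective hU (fun _ hx => S.hasFDerivAt_compWord α (hUW hx))
    (fun _ hx => (S.isConformalMap_derivWord α (hUW hx)).injective) ((S.injOn_compWord α).mono hUW)


def BoundedDistortionWith (K : ℝ) : Prop :=
  ∀ ω : List E, ω ≠ [] → ∀ p ∈ S.W, ∀ q ∈ S.W, ‖S.derivWord ω p‖ ≤ K * ‖S.derivWord ω q‖

variable {S}

/-- Chaining the mean value theorem along the connected set `W`. -/
theorem exists_dist_compWord_le {K : ℝ} (hK : S.BoundedDistortionWith K)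
    {q₀ a b : EuclideanSpace ℝ (Fin n)} (hq₀ : q₀ ∈ S.W) (ha : a ∈ S.W) (hb : b ∈ S.W) :
    ∃ C, ∀ α : List E, α ≠ [] →
      dist (S.compWord α a) (S.compWord α b) ≤ C * ‖S.derivWord α q₀‖ := by
  refine S.hWconn.isPreconnected.induction₂
    (fun a b => ∃ C, ∀ α : List E, α ≠ [] →
      dist (S.compWord α a) (S.compWord α b) ≤ C * ‖S.derivWord α q₀‖) (fun a ha => ?_) ?_ ?_ ha hb
  · obtain ⟨δ, hδ, hδW⟩ := Metric.isOpen_iff.1 S.hWopen a ha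
    filter_upwards [nhdsWithin_le_nhds (ball_mem_nhds a hδ)] with b hb
    refine ⟨K * δ, fun α hα => ?_⟩
    rw [dist_eq_norm']
    calc ‖S.compWord α b - S.compWord α a‖ ≤ K * ‖S.derivWord α q₀‖ * ‖b - a‖ :=
          (convex_ball a δ).norm_image_sub_le_of_norm_hasFDerivWithin_le
            (fun x hx => (S.hasFDerivAt_compWord α (hδW hx)).hasFDerivWithinAt)
            (fun x hx => hK α hα x (hδW hx) q₀ hq₀) (mem_ball_self hδ) hb
      _ ≤ K * ‖S.derivWord α q₀‖ * δ := by
          have hK0 : 0 ≤ K * ‖S.derivWord α q₀‖ :=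
            (norm_nonneg _).trans (hK α hα q₀ hq₀ q₀ hq₀)
          exact mul_le_mul_of_nonneg_left (by rw [← dist_eq_norm]; exact (mem_ball.1 hb).le) hK0
      _ = K * δ * ‖S.derivWord α q₀‖ := by ring
  · rintro a b c - - - ⟨C₁, h₁⟩ ⟨C₂, h₂⟩
    refine ⟨C₁ + C₂, fun α hα => ?_⟩
    linarith [dist_triangle (S.compWord α a) (S.compWord α b) (S.compWord α c), h₁ α hα, h₂ α hα]
  · rintro a b - - ⟨C, h⟩
    exact ⟨C, fun α hα => by rw [dist_comm]; exact h α hα⟩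

/-- Induction on the shorter word: equal first letters are cancelled by injectivity, different
first letters are separated by the Open Set Condition. -/
theorem disjoint_image_compWord_of_length_lt {H : Set (EuclideanSpace ℝ (Fin n))}
    (hH : IsOpen H) (hHX : H ⊆ interior S.X) (hHY : Disjoint H (⋃ e, S.φ e '' S.X)) :
    ∀ α β : List E, α.length < β.length → Disjoint (S.compWord β '' S.X) (S.compWord α '' H)
  | _, [], h => absurd h (Nat.not_lt_zero _)
  | [], b :: β, _ => by
    have hβ : S.compWord (b :: β) '' S.X ⊆ ⋃ e, S.φ e '' S.X := by
      rw [compWord_cons, image_comp]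
      exact (image_mono (S.mapsTo_compWord_X β).image_subset).trans
        (subset_iUnion_of_subset b le_rfl)
    exact (hHY.mono_right hβ).symm.mono_right (image_id H).le
  | a :: α, b :: β, h => by
    rw [compWord_cons, compWord_cons, image_comp, image_comp]
    have hHW : H ⊆ S.W := (hHX.trans interior_subset).trans S.hXW
    have hαH : S.compWord α '' H ⊆ interior S.X :=
      interior_maximal ((image_mono (hHX.trans interior_subset)).trans
        (S.mapsTo_compWord_X α).image_subset) (S.isOpen_image_compWord α hH hHW)
    have hαW : S.compWord α '' H ⊆ S.W := hαH.trans (interior_subset.trans S.hXW)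
    by_cases hab : b = a
    · subst hab
      exact (disjoint_image_compWord_of_length_lt hH hHX hHY α β (by simpa using h)).image
        (S.hInj b) ((S.mapsTo_compWord_X β).image_subset.trans S.hXW) hαW
    · have hbX : S.φ b '' (S.compWord β '' S.X) ⊆ closure (S.φ b '' interior S.X) := by
        refine (image_mono (S.mapsTo_compWord_X β).image_subset).trans ?_
        conv_lhs => rw [S.hXreg]
        exact ContinuousOn.image_closure fun x hx =>
          (S.hDeriv b x (S.hXW (S.hXreg ▸ hx))).continuousAt.continuousWithinAt
      refine Disjoint.mono_left hbX (Disjoint.closure_left ?_ ?_)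
      · exact (S.hOSC b a hab).mono_right (image_mono hαH)
      · exact S.isOpen_image_compWord [a] (S.isOpen_image_compWord α hH hHW) hαW

theorem disjoint_range_image_compWord {π : (ℕ → E) → EuclideanSpace ℝ (Fin n)}
    (hπ : ∀ ω : ℕ → E, ∀ m : ℕ, π ω ∈ S.compWord (List.ofFn fun i : Fin m => ω i) '' S.X)
    {H : Set (EuclideanSpace ℝ (Fin n))} (hH : IsOpen H) (hHX : H ⊆ interior S.X)
    (hHY : Disjoint H (⋃ e, S.φ e '' S.X)) (α : List E) :
    Disjoint (range π) (S.compWord α '' H) := by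
  refine disjoint_left.2 ?_
  rintro _ ⟨τ, rfl⟩
  exact disjoint_left.1 (disjoint_image_compWord_of_length_lt hH hHX hHY α _ (by simp))
    (hπ τ (α.length + 1))

theorem ball_subset_image_compWord [Nontrivial (EuclideanSpace ℝ (Fin n))] {K : ℝ} (hK0 : 0 < K)
    (hK : S.BoundedDistortionWith K) {α : List E} (hα : α ≠ []) {q₀ z : EuclideanSpace ℝ (Fin n)}
    (hq₀ : q₀ ∈ S.W) {r R : ℝ} (hrR : r < R) (hzR : closedBall z R ⊆ S.W) :
    ball (S.compWord α z) (‖S.derivWord α q₀‖ / K * r) ⊆ S.compWord α '' closedBall z r :=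
  ball_subset_image_closedBall_of_mul_norm_le
    (div_pos (norm_pos_iff.2 (S.isConformalMap_derivWord α hq₀).ne_zero) hK0) hrR
    (fun x hx => S.hasFDerivAt_compWord α (hzR hx))
    (fun x hx v => by
      rw [(S.isConformalMap_derivWord α (hzR hx)).norm_map]
      exact mul_le_mul_of_nonneg_right ((div_le_iff₀' hK0).2 (hK α hα q₀ hq₀ x (hzR hx)))
        (norm_nonneg v))
    ((S.injOn_compWord α).mono hzR)

theorem norm_derivWord_flatten_replicate [Nontrivial (EuclideanSpace ℝ (Fin n))] {ω : List E}
    {x : EuclideanSpace ℝ (Fin n)} (hx : x ∈ S.W) (hfix : S.compWord ω x = x) (k : ℕ) :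
    ‖S.derivWord (List.replicate k ω).flatten x‖ = ‖S.derivWord ω x‖ ^ k := by
  induction k with
  | zero => exact ContinuousLinearMap.norm_id
  | succ k ih =>
    rw [List.replicate_succ, List.flatten_cons, derivWord_append,
      S.compWord_flatten_replicate_apply hfix, (S.isConformalMap_derivWord ω hx).norm_comp
        (S.isConformalMap_derivWord _ hx), ih, pow_succ']

theorem porousAt_range_of_isFixedPt [Nontrivial (EuclideanSpace ℝ (Fin n))] {K : ℝ}
    (hK0 : 0 < K) (hK : S.BoundedDistortionWith K) {π : (ℕ → E) → EuclideanSpace ℝ (Fin n)}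
    (hπ : ∀ ω : ℕ → E, ∀ m : ℕ, π ω ∈ S.compWord (List.ofFn fun i : Fin m => ω i) '' S.X)
    {z : EuclideanSpace ℝ (Fin n)} {R : ℝ} (hR : 0 < R) (hHX : ball z R ⊆ interior S.X)
    (hHY : Disjoint (ball z R) (⋃ e, S.φ e '' S.X)) {ω : List E} (hω : ω ≠ [])
    {x : EuclideanSpace ℝ (Fin n)} (hx : x ∈ S.X) (hfix : S.compWord ω x = x) :
    PorousAt (range π) x := by
  have hxW := S.hXW hx
  have hHW : ball z R ⊆ S.W := hHX.trans (interior_subset.trans S.hXW)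
  set l := ‖S.derivWord ω x‖
  have hl0 : 0 < l := norm_pos_iff.2 (S.isConformalMap_derivWord ω hxW).ne_zero
  have hl1 : l < 1 := (S.norm_derivWord_le ω hxW).trans_lt
    (pow_lt_one₀ S.hs.1.le S.hs.2 (List.length_pos_iff.2 hω).ne')
  set ωk := fun k : ℕ => (List.replicate (k + 1) ω).flatten
  have hωk : ∀ k, ωk k ≠ [] := fun k => by simp [ωk, hω]
  have hωkl : ∀ k, ‖S.derivWord (ωk k) x‖ = l * l ^ k := fun k => by
    rw [S.norm_derivWord_flatten_replicate hxW hfix, pow_succ']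
  obtain ⟨C, hC⟩ := exists_dist_compWord_le hK hxW (hHW (mem_ball_self hR)) hxW
  have hC0 : 0 ≤ C := nonneg_of_mul_nonneg_left (dist_nonneg.trans (hC ω hω)) hl0
  refine porousAt_of_geometric_holes hl0 hl1 (a := C * l) (b := l / K * (R / 4)) (by positivity)
    (by positivity) (fun k => S.compWord (ωk k) z) (fun k => ?_) (fun k => ?_)
  · calc dist (S.compWord (ωk k) z) x = dist (S.compWord (ωk k) z) (S.compWord (ωk k) x) := by
          rw [S.compWord_flatten_replicate_apply hfix]
      _ ≤ C * (l * l ^ k) := hωkl k ▸ hC _ (hωk k)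
      _ = C * l * l ^ k := by ring
  · have hball := ball_subset_image_compWord hK0 hK (hωk k) hxW (r := R / 4) (by linarith)
      ((closedBall_subset_ball (by linarith : R / 2 < R)).trans hHW)
    rw [hωkl] at hball
    refine Disjoint.mono_left ?_ (disjoint_range_image_compWord hπ isOpen_ball hHX hHY (ωk k)).symm
    refine le_trans (le_of_eq ?_) (hball.trans (image_mono (closedBall_subset_ball (by linarith))))
    congr 1
    ring

theorem exists_isFixedPt_compWord {α : List E} (hα : α ≠ []) :
    ∃ x ∈ S.X, S.compWord α x = x := by
  have hlt : S.s.toNNReal ^ α.length < 1 :=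
    pow_lt_one₀ zero_le (Real.toNNReal_lt_one.2 S.hs.2) (List.length_pos_iff.2 hα).ne'
  obtain ⟨x₀, hx₀⟩ := S.hXconn.nonempty
  obtain ⟨x, hx, hfix, -⟩ := ContractingWith.exists_fixedPoint' S.hXcompact.isComplete
    (S.mapsTo_compWord_X α) ⟨hlt, ((S.lipschitzOnWith_compWord α).mono S.hXW).mapsToRestrict _⟩
    hx₀ (edist_ne_top _ _)
  exact ⟨x, hx, hfix⟩

theorem range_subset_closure_fixedPoints {π : (ℕ → E) → EuclideanSpace ℝ (Fin n)}
    (hπ : ∀ ω : ℕ → E, ∀ m : ℕ, π ω ∈ S.compWord (List.ofFn fun i : Fin m => ω i) '' S.X) :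
    range π ⊆ closure {x | ∃ ω : List E, ω ≠ [] ∧ x ∈ S.X ∧ S.compWord ω x = x} := by
  rintro _ ⟨τ, rfl⟩
  set α := fun m : ℕ => List.ofFn fun i : Fin (m + 1) => τ i
  have hα : ∀ m, α m ≠ [] := fun m => by simp [α]
  choose x hxX hfix using fun m => S.exists_isFixedPt_compWord (hα m)
  refine mem_closure_of_tendsto (f := x) (b := atTop) ?_
    (Eventually.of_forall fun m => ⟨α m, hα m, hxX m, hfix m⟩)
  rw [tendsto_iff_dist_tendsto_zero]
  have hlim : Tendsto (fun m : ℕ => S.s * (S.s ^ m * diam S.X)) atTop (𝓝 0) := by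
    simpa using ((tendsto_pow_atTop_nhds_zero_of_lt_one S.hs.1.le S.hs.2).mul_const
      (diam S.X)).const_mul S.s
  refine squeeze_zero (fun _ => dist_nonneg) (fun m => ?_) hlim
  obtain ⟨u, hu, hπu⟩ := hπ τ (m + 1)
  have hlip := (S.lipschitzOnWith_compWord (α m)).dist_le_mul _ (S.hXW (hxX m)) _ (S.hXW hu)
  rw [hfix, hπu] at hlip
  simp only [α, List.length_ofFn, NNReal.coe_pow, Real.coe_toNNReal _ S.hs.1.le] at hlip
  calc dist (x m) (π τ) ≤ S.s ^ (m + 1) * dist (x m) u := hlip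
    _ ≤ S.s ^ (m + 1) * diam S.X := mul_le_mul_of_nonneg_left
        (dist_le_diam_of_mem S.hXcompact.isBounded (hxX m) hu) (pow_nonneg S.hs.1.le _)
    _ = S.s * (S.s ^ m * diam S.X) := by ring

end CIFS

theorem stmt0_general {n : ℕ} {E : Type*}
    (S : CIFS n E) (hBDP : S.BDP)
    (π : (ℕ → E) → EuclideanSpace ℝ (Fin n))
    (hπ : ∀ ω : ℕ → E, ∀ m : ℕ,
      π ω ∈ S.compWord (List.ofFn fun i : Fin m => ω i) '' S.X)
    (hxx1 : (S.X \ closure (⋃ e : E, S.φ e '' S.X)).Nonempty) :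
    (∀ ω : List E, ω ≠ [] → ∀ x ∈ S.X, S.compWord ω x = x →
        PorousAt (Set.range π) x) ∧
    Set.range π ⊆
      closure {x | ∃ ω : List E, ω ≠ [] ∧ x ∈ S.X ∧ S.compWord ω x = x} := by
  obtain ⟨K, hK1, hK⟩ := hBDP
  refine ⟨fun ω hω x hx hfix => ?_, S.range_subset_closure_fixedPoints hπ⟩
  obtain ⟨z, R, hR, hHX, hHY⟩ := exists_ball_subset_interior_disjoint S.hXreg hxx1
  rcases subsingleton_or_nontrivial (EuclideanSpace ℝ (Fin n)) with hsub | hnt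
  · -- in `ℝ⁰` the centre of the hole would be `φ_e(x)`
    exact (disjoint_left.1 hHY (mem_ball_self hR)
      (mem_iUnion.2 ⟨ω.head hω, x, hx, Subsingleton.elim _ _⟩)).elim
  · exact S.porousAt_range_of_isFixedPt (by linarith) hK hπ hR hHX hHY hω hx hfix

/-- If a CIFS satisfies `X ∖ closure(⋃ₑ φₑ(X)) ≠ ∅`, then the limit set
`J = range π` is porous at the (unique) fixed point of `φ_ω` for every nonempty word `ω`,
and the set of such fixed points is dense in `J`; in particular `J` is porous at every
point of a dense subset of `J`. -/
theorem stmt0 {n : ℕ} {E : Type*} [Countable E] [Nontrivial E]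
    (S : CIFS n E) (hBDP : S.BDP)
    (π : (ℕ → E) → EuclideanSpace ℝ (Fin n))
    (hπ : ∀ ω : ℕ → E, ∀ m : ℕ,
      π ω ∈ S.compWord (List.ofFn fun i : Fin m => ω i) '' S.X)
    (hxx1 : (S.X \ closure (⋃ e : E, S.φ e '' S.X)).Nonempty) :
    (∀ ω : List E, ω ≠ [] → ∀ x ∈ S.X, S.compWord ω x = x →
        PorousAt (Set.range π) x) ∧
    Set.range π ⊆
      closure {x | ∃ ω : List E, ω ≠ [] ∧ x ∈ S.X ∧ S.compWord ω x = x} :=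
  stmt0_general S hBDP π hπ hxx1
end

section
/- Let n ≥ 1, X ⊆ ℝⁿ, ξ ∈ X, let W be an open connected neighborhood of ξ in ℝⁿ, and let φ : W → ℝⁿ be an injective C¹ map whose derivative at every point of W is an invertible similarity (a conformal diffeomorphism of W onto φ(W)). Let α > 0 and p ≥ 0. If X is (α,p)-mean porous at ξ, and if Y ⊆ ℝⁿ satisfies φ(ξ) ∈ Y and Y ∩ φ(W) ⊆ φ(X ∩ W), then Y is (α,p)-mean porous at φ(ξ). -/
open Metric Set Filter

/-- `underlineA A x β s = liminf_{i→∞} (1/i)·#{ j ∈ {1,…,i} : por(A,x,s·2⁻ʲ) > β }`. -/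
noncomputable def underlineA {X : Type*} [MetricSpace X] (A : Set X) (x : X) (β s : ℝ) : ℝ :=
  Filter.atTop.liminf fun i : ℕ =>
    ({j : ℕ | j ∈ Set.Icc 1 i ∧ β < por A x (s / 2 ^ j)}.ncard : ℝ) / i

/-- `A` is `(α,p)`-mean porous at `x`:
`sup_{s ∈ (0,1/2]} sup_{β > α} underlineA A x β s > p`. -/
def MeanPorousAt {X : Type*} [MetricSpace X] (A : Set X) (α p : ℝ) (x : X) : Prop :=
  ∃ s ∈ Set.Ioc (0 : ℝ) (1 / 2), ∃ β > α, p < underlineA A x β s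


set_option linter.unusedSectionVars false
set_option linter.unusedVariables false

section Aux
variable {E : Type*} [NormedAddCommGroup E] [NormedSpace ℝ E] [Nontrivial E]

lemma ball_subset_norm_add_le {y x : E} {ρ r : ℝ} (hρ : 0 < ρ)
    (h : ball y ρ ⊆ ball x r) : ‖y - x‖ + ρ ≤ r := by
  have key : ∀ t, 0 ≤ t → t < ρ → ‖y - x‖ + t < r := by
    intro t ht htρ
    by_cases hyx : y = x
    · obtain ⟨v, hv⟩ := exists_norm_eq E ht
      have h1 : y + v ∈ ball y ρ := by
        simp [mem_ball, dist_eq_norm, hv, htρ]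
      have h2 := h h1
      simp only [mem_ball, dist_eq_norm, hyx] at h2 ⊢
      simpa [hyx, hv, sub_eq_zero] using h2
    · have hpos : (0:ℝ) < ‖y - x‖ := by
        simpa [norm_pos_iff, sub_eq_zero] using hyx
      set v := (t / ‖y - x‖) • (y - x) with hv
      have h1 : y + v ∈ ball y ρ := by
        have : ‖v‖ = t := by
          rw [hv, norm_smul, Real.norm_eq_abs, abs_of_nonneg (by positivity)]
          field_simp
        simp [mem_ball, dist_eq_norm, this, htρ]
      have h2 := h h1
      rw [mem_ball, dist_eq_norm] at h2
      have heq : y + v - x = (1 + t / ‖y - x‖) • (y - x) := by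
        rw [hv]; module
      rw [heq, norm_smul, Real.norm_eq_abs, abs_of_nonneg (by positivity)] at h2
      have : (1 + t / ‖y - x‖) * ‖y - x‖ = ‖y - x‖ + t := by field_simp
      linarith [this ▸ h2]
  by_contra hcon
  push_neg at hcon
  by_cases hr : r ≤ ‖y - x‖
  · have := key 0 le_rfl hρ; linarith
  · push_neg at hr
    have := key (r - ‖y - x‖) (by linarith) (by linarith)
    linarith

lemma porSet_bddAbove (A : Set E) (x : E) {r : ℝ} (hr : 0 < r) :
    BddAbove {c : ℝ | 0 ≤ c ∧ ∃ y : E, ball y (c * r) ⊆ ball x r \ A} := by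
  refine ⟨1, fun c hc => ?_⟩
  obtain ⟨hc0, y, hy⟩ := hc
  rcases eq_or_lt_of_le hc0 with h | h
  · exact h ▸ zero_le_one
  · have := ball_subset_norm_add_le (mul_pos h hr) (hy.trans diff_subset)
    nlinarith [norm_nonneg (y - x)]

lemma le_por {A : Set E} {x : E} {r c : ℝ} (hr : 0 < r) (hc : 0 ≤ c) (y : E)
    (h : ball y (c * r) ⊆ ball x r \ A) : c ≤ por A x r :=
  le_csSup (porSet_bddAbove A x hr) ⟨hc, y, h⟩

lemma lt_por_elim {A : Set E} {x : E} {r β : ℝ} (h : β < por A x r) :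
    ∃ c, β < c ∧ 0 ≤ c ∧ ∃ y : E, ball y (c * r) ⊆ ball x r \ A := by
  have hne : Set.Nonempty {c : ℝ | 0 ≤ c ∧ ∃ y : E, ball y (c * r) ⊆ ball x r \ A} :=
    ⟨0, le_rfl, x, by simp⟩
  obtain ⟨c, hcS, hc⟩ := exists_lt_of_lt_csSup hne h
  exact ⟨c, hc, hcS⟩

end Aux


lemma count_finite (P : ℕ → Prop) (i : ℕ) : {j : ℕ | j ∈ Set.Icc 1 i ∧ P j}.Finite :=
  (Set.finite_Icc 1 i).subset (fun _ hj => hj.1)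

lemma ncard_set_Icc (a b : ℕ) : (Set.Icc a b).ncard = b + 1 - a := by
  rw [← Finset.coe_Icc, Set.ncard_coe_finset, Nat.card_Icc]

lemma count_le (P : ℕ → Prop) (i : ℕ) : {j : ℕ | j ∈ Set.Icc 1 i ∧ P j}.ncard ≤ i := by
  calc {j : ℕ | j ∈ Set.Icc 1 i ∧ P j}.ncard
      ≤ (Set.Icc 1 i).ncard := Set.ncard_le_ncard (fun _ hj => hj.1) (Set.finite_Icc 1 i)
    _ = i := by rw [ncard_set_Icc]; omega

lemma liminf_shift (P Q : ℕ → Prop) (a b J : ℕ) (hJb : b + 1 ≤ J)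
    (h : ∀ j, J ≤ j → P j → Q (j + a - b)) (p : ℝ) (hp : 0 ≤ p)
    (hP : p < Filter.atTop.liminf
      (fun i : ℕ => (({j : ℕ | j ∈ Set.Icc 1 i ∧ P j}).ncard : ℝ) / i)) :
    p < Filter.atTop.liminf
      (fun i : ℕ => (({j : ℕ | j ∈ Set.Icc 1 i ∧ Q j}).ncard : ℝ) / i) := by
  set u : ℕ → ℝ := fun i => (({j : ℕ | j ∈ Set.Icc 1 i ∧ P j}).ncard : ℝ) / i with hu
  set v : ℕ → ℝ := fun i => (({j : ℕ | j ∈ Set.Icc 1 i ∧ Q j}).ncard : ℝ) / i with hv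
  have hu0 : ∀ i, 0 ≤ u i := fun i => by positivity
  have hv0 : ∀ i, 0 ≤ v i := fun i => by positivity
  set q : ℝ := (p + Filter.atTop.liminf u) / 2 with hq
  have hpq : p < q := by simp only [hq]; linarith
  have hqL : q < Filter.atTop.liminf u := by simp only [hq]; linarith
  have hq0 : 0 < q := lt_of_le_of_lt hp hpq
  have hev : ∀ᶠ i in atTop, q < u i :=
    eventually_lt_of_lt_liminf hqL ⟨0, by simpa [eventually_map] using ⟨0, fun i _ => hu0 i⟩⟩
  -- key counting inequality
  have key : ∀ i : ℕ, a ≤ i →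
      (({j : ℕ | j ∈ Set.Icc 1 (i - a) ∧ P j}).ncard : ℝ) - J ≤
      (({j : ℕ | j ∈ Set.Icc 1 i ∧ Q j}).ncard : ℝ) := by
    intro i hai
    set S : Set ℕ := {j : ℕ | j ∈ Set.Icc J (i - a) ∧ P j} with hS
    have hSfin : S.Finite := (Set.finite_Icc J (i - a)).subset (fun _ hj => hj.1)
    have hinj : Set.InjOn (fun j => j + a - b) S := by
      intro j₁ hj₁ j₂ hj₂ hf
      have h1 : J ≤ j₁ := hj₁.1.1
      have h2 : J ≤ j₂ := hj₂.1.1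
      simp only at hf
      omega
    have himg : (fun j => j + a - b) '' S ⊆ {j : ℕ | j ∈ Set.Icc 1 i ∧ Q j} := by
      rintro _ ⟨j, hj, rfl⟩
      obtain ⟨⟨hj1, hj2⟩, hjP⟩ := hj
      have hj2' : j ≤ i - a := hj2
      refine ⟨⟨?_, ?_⟩, h j hj1 hjP⟩ <;> dsimp only <;> omega
    have h1 : S.ncard ≤ ({j : ℕ | j ∈ Set.Icc 1 i ∧ Q j}).ncard := by
      rw [← Set.ncard_image_of_injOn hinj]
      exact Set.ncard_le_ncard himg (count_finite Q i)
    have h2 : ({j : ℕ | j ∈ Set.Icc 1 (i - a) ∧ P j}).ncard ≤ S.ncard + J := by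
      have hsub : {j : ℕ | j ∈ Set.Icc 1 (i - a) ∧ P j} ⊆ S ∪ Set.Icc 1 (J - 1) := by
        intro j hj
        obtain ⟨⟨hj1, hj2⟩, hjP⟩ := hj
        by_cases hjJ : J ≤ j
        · exact Or.inl ⟨⟨hjJ, hj2⟩, hjP⟩
        · exact Or.inr ⟨hj1, by omega⟩
      calc ({j : ℕ | j ∈ Set.Icc 1 (i - a) ∧ P j}).ncard
          ≤ (S ∪ Set.Icc 1 (J - 1)).ncard :=
            Set.ncard_le_ncard hsub (hSfin.union (Set.finite_Icc _ _))
        _ ≤ S.ncard + (Set.Icc 1 (J - 1)).ncard := Set.ncard_union_le _ _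
        _ ≤ S.ncard + J := by rw [ncard_set_Icc]; omega
    have hc1 : (({j : ℕ | j ∈ Set.Icc 1 (i - a) ∧ P j}).ncard : ℝ) ≤ (S.ncard : ℝ) + J := by
      exact_mod_cast h2
    have hc2 : (S.ncard : ℝ) ≤ (({j : ℕ | j ∈ Set.Icc 1 i ∧ Q j}).ncard : ℝ) := by
      exact_mod_cast h1
    linarith
  -- eventual lower bound for v
  set q' : ℝ := (p + q) / 2 with hq'
  have hpq' : p < q' := by simp only [hq']; linarith
  have hq'q : q' < q := by simp only [hq']; linarith
  obtain ⟨N₁, hN₁⟩ := (eventually_atTop).mp hev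
  obtain ⟨N₂, hN₂⟩ : ∃ N₂ : ℕ, ∀ i : ℕ, N₂ ≤ i → (q * a + J : ℝ) / i ≤ q - q' := by
    obtain ⟨N₂, hN₂⟩ := exists_nat_gt ((q * a + J : ℝ) / (q - q'))
    refine ⟨N₂ + 1, fun i hi => ?_⟩
    have hipos : (0:ℝ) < i := by
      have h0 : 1 ≤ i := by omega
      exact_mod_cast h0
    rw [div_le_iff₀ hipos]
    have hNi : ((q * a + J : ℝ) / (q - q')) < (i:ℝ) := lt_of_lt_of_le hN₂ (by exact_mod_cast le_trans (Nat.le_succ N₂) hi)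
    have h1 : (q * a + J : ℝ) < i * (q - q') := by
      rw [div_lt_iff₀ (by linarith)] at hNi; linarith
    linarith
  have hevv : ∀ᶠ i in atTop, q' ≤ v i := by
    rw [eventually_atTop]
    refine ⟨N₁ + N₂ + a + 1, fun i hi => ?_⟩
    have hai : a ≤ i := by omega
    have hN1 : N₁ ≤ i - a := by omega
    have hN2 : N₂ ≤ i := by omega
    have hipos : (0:ℝ) < i := by
      have : 1 ≤ i := by omega
      exact_mod_cast this
    have hiapos : (0:ℝ) < ((i - a : ℕ) : ℝ) := by
      have : 1 ≤ i - a := by omega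
      exact_mod_cast this
    have hcount : q * ((i - a : ℕ) : ℝ) < (({j : ℕ | j ∈ Set.Icc 1 (i - a) ∧ P j}).ncard : ℝ) := by
      have h3 := hN₁ (i - a) hN1
      rw [hu, lt_div_iff₀ hiapos] at h3
      linarith
    have hia : ((i - a : ℕ) : ℝ) = (i : ℝ) - a := by
      push_cast [hai]; ring
    have hkey := key i hai
    have hN2' := hN₂ i hN2
    rw [div_le_iff₀ hipos] at hN2'
    have hvi : (q * ((i:ℝ) - a) - J) / i ≤ v i := by
      rw [hv, div_le_div_iff_of_pos_right hipos]
      rw [hia] at hcount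
      linarith
    refine le_trans ?_ hvi
    rw [le_div_iff₀ hipos]
    nlinarith
  have hvb : atTop.IsCoboundedUnder (· ≥ ·) v := by
    refine Filter.IsBoundedUnder.isCoboundedUnder_ge ⟨1, ?_⟩
    simp only [eventually_map, eventually_atTop]
    refine ⟨1, fun i hi => ?_⟩
    have hipos : (0:ℝ) < i := by exact_mod_cast hi
    rw [hv, div_le_one hipos]
    exact_mod_cast count_le Q i
  exact lt_of_lt_of_le hpq' (le_liminf_of_le hvb hevv)


open scoped RealInnerProductSpace

section Geo
variable {n : ℕ}

lemma conformal_norm {T : EuclideanSpace ℝ (Fin n) →L[ℝ] EuclideanSpace ℝ (Fin n)}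
    (hT : IsConformalMap T) :
    ∃ lam : ℝ, 0 < lam ∧ ∀ v : EuclideanSpace ℝ (Fin n), ‖T v‖ = lam * ‖v‖ := by
  obtain ⟨c, hc, li, rfl⟩ := hT
  refine ⟨|c|, abs_pos.2 hc, fun v => ?_⟩
  simp [norm_smul, Real.norm_eq_abs, li.norm_map]

lemma conformal_surj {T : EuclideanSpace ℝ (Fin n) →L[ℝ] EuclideanSpace ℝ (Fin n)}
    (hT : IsConformalMap T) : Function.Surjective T := by
  obtain ⟨lam, hlam, hnm⟩ := conformal_norm hT
  have hinj : Function.Injective T := by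
    intro u v huv
    have h1 : ‖T (u - v)‖ = 0 := by rw [map_sub, huv, sub_self, norm_zero]
    rw [hnm] at h1
    have h2 := (mul_eq_zero.mp h1).resolve_left (ne_of_gt hlam)
    rwa [norm_eq_zero, sub_eq_zero] at h2
  have := LinearMap.injective_iff_surjective
    (f := (T : EuclideanSpace ℝ (Fin n) →ₗ[ℝ] EuclideanSpace ℝ (Fin n))) |>.mp hinj
  exact this

lemma loc_surj (hn : 1 ≤ n) (W : Set (EuclideanSpace ℝ (Fin n))) (hWopen : IsOpen W)
    (φ : EuclideanSpace ℝ (Fin n) → EuclideanSpace ℝ (Fin n))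
    (D : EuclideanSpace ℝ (Fin n) → EuclideanSpace ℝ (Fin n) →L[ℝ] EuclideanSpace ℝ (Fin n))
    (hInj : Set.InjOn φ W)
    (hDeriv : ∀ x ∈ W, HasFDerivAt φ (D x) x)
    (hConf : ∀ x ∈ W, IsConformalMap (D x))
    (ξ : EuclideanSpace ℝ (Fin n)) (hξW : ξ ∈ W)
    (r : ℝ) (hr : 0 < r) (hball : closedBall ξ r ⊆ W) :
    ∃ ρ > 0, ball (φ ξ) ρ ⊆ φ '' (closedBall ξ r) := by
  haveI : Nontrivial (EuclideanSpace ℝ (Fin n)) := by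
    apply Module.nontrivial_of_finrank_pos (R := ℝ)
    rw [finrank_euclideanSpace_fin]
    omega
  have hcont : ∀ x ∈ closedBall ξ r, ContinuousAt φ x :=
    fun x hx => (hDeriv x (hball hx)).continuousAt
  have hsph : (sphere ξ r).Nonempty := NormedSpace.sphere_nonempty.mpr hr.le
  have hsphsub : sphere ξ r ⊆ closedBall ξ r := sphere_subset_closedBall
  have hcsph : ContinuousOn (fun x => ‖φ x - φ ξ‖) (sphere ξ r) := by
    apply ContinuousOn.norm
    exact ContinuousOn.sub
      (fun x hx => (hcont x (hsphsub hx)).continuousWithinAt) continuousOn_const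
  obtain ⟨x₀, hx₀s, hx₀min⟩ := (isCompact_sphere ξ r).exists_isMinOn hsph hcsph
  set d : ℝ := ‖φ x₀ - φ ξ‖ with hd
  have hdpos : 0 < d := by
    rw [hd, norm_pos_iff, sub_ne_zero]
    intro heq
    have hx₀W : x₀ ∈ W := hball (hsphsub hx₀s)
    have : x₀ = ξ := hInj hx₀W hξW heq
    rw [this] at hx₀s
    rw [mem_sphere, dist_self] at hx₀s
    linarith
  refine ⟨d / 2, by linarith, fun y hy => ?_⟩
  rw [mem_ball, dist_eq_norm] at hy
  -- minimize ⟪φ x - y, φ x - y⟫ over the closed ball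
  set g : EuclideanSpace ℝ (Fin n) → ℝ := fun x => ⟪φ x - y, φ x - y⟫ with hg
  have hgnorm : ∀ x, g x = ‖φ x - y‖ ^ 2 := fun x => real_inner_self_eq_norm_sq _
  have hgcont : ContinuousOn g (closedBall ξ r) := by
    have h1 : ContinuousOn (fun x => φ x - y) (closedBall ξ r) :=
      ContinuousOn.sub (fun x hx => (hcont x hx).continuousWithinAt) continuousOn_const
    exact ContinuousOn.inner h1 h1
  obtain ⟨x₁, hx₁cb, hx₁min⟩ := (isCompact_closedBall ξ r).exists_isMinOn
    ⟨ξ, mem_closedBall_self hr.le⟩ hgcont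
  have hx₁W : x₁ ∈ W := hball hx₁cb
  have hgξ : g ξ < (d / 2) ^ 2 := by
    rw [hgnorm]
    apply pow_lt_pow_left₀ ?_ (norm_nonneg _) (by norm_num)
    rwa [← norm_sub_rev]
  have hx₁ball : x₁ ∈ ball ξ r := by
    rw [mem_ball]
    rcases lt_or_eq_of_le (mem_closedBall.mp hx₁cb) with h | h
    · exact h
    exfalso
    have hx₁s : x₁ ∈ sphere ξ r := h
    have h1 : d ≤ ‖φ x₁ - φ ξ‖ := hx₀min hx₁s
    have h2 : d / 2 < ‖φ x₁ - y‖ := by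
      have := norm_sub_norm_le (φ x₁ - φ ξ) (y - φ ξ)
      have h3 : φ x₁ - φ ξ - (y - φ ξ) = φ x₁ - y := by abel
      rw [h3] at this
      linarith
    have h4 : (d / 2) ^ 2 < g x₁ := by
      rw [hgnorm]
      apply pow_lt_pow_left₀ h2 (by linarith) (by norm_num)
    have h5 : g x₁ ≤ g ξ := hx₁min (mem_closedBall_self hr.le)
    linarith
  -- derivative of g at x₁ vanishes
  have hlocmin : IsLocalMin g x₁ :=
    hx₁min.isLocalMin (mem_nhds_iff.mpr ⟨ball ξ r, ball_subset_closedBall, isOpen_ball, hx₁ball⟩)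
  have hF : HasFDerivAt (fun x => φ x - y) (D x₁) x₁ := (hDeriv x₁ hx₁W).sub_const y
  have hDg : HasFDerivAt g
      ((fderivInnerCLM ℝ (φ x₁ - y, φ x₁ - y)).comp <| (D x₁).prod (D x₁)) x₁ :=
    HasFDerivAt.inner ℝ hF hF
  have hzero := hlocmin.hasFDerivAt_eq_zero hDg
  have hperp : ∀ v, ⟪φ x₁ - y, D x₁ v⟫ = 0 := by
    intro v
    have h6 := congrFun (congrArg DFunLike.coe hzero) v
    rw [ContinuousLinearMap.comp_apply, ContinuousLinearMap.zero_apply] at h6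
    rw [ContinuousLinearMap.prod_apply, fderivInnerCLM_apply] at h6
    simp only at h6
    rw [real_inner_comm (φ x₁ - y) ((D x₁) v)] at h6
    linarith
  obtain ⟨v, hv⟩ := conformal_surj (hConf x₁ hx₁W) (φ x₁ - y)
  have h7 := hperp v
  rw [hv, inner_self_eq_zero, sub_eq_zero] at h7
  exact ⟨x₁, hx₁cb, h7⟩

end Geo


lemma exists_scale (lam s : ℝ) (hlam : 0 < lam) (hs : 0 < s) :
    ∃ (s' : ℝ) (a b : ℕ), 0 < s' ∧ s' ≤ 1 / 2 ∧
      ∀ j : ℕ, b ≤ j → s' / 2 ^ (j + a - b) = lam * (s / 2 ^ j) := by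
  obtain ⟨k, hk1, hk2⟩ := exists_mem_Ico_zpow (x := 2 * (lam * s)) (y := (2:ℝ))
    (by positivity) one_lt_two
  set m : ℤ := k + 1 with hm
  have h2m : (0:ℝ) < 2 ^ m := zpow_pos (by norm_num) m
  refine ⟨lam * s / 2 ^ m, if 0 ≤ m then 0 else (-m).toNat,
    if 0 ≤ m then m.toNat else 0, by positivity, ?_, ?_⟩
  · rw [div_le_div_iff₀ h2m (by norm_num : (0:ℝ) < 2)]
    have h1 : (2:ℝ) ^ m = 2 ^ k * 2 := by
      rw [hm, zpow_add₀ (two_ne_zero) k 1, zpow_one]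
    have h2 : 2 * (lam * s) < 2 ^ k * 2 := by rw [← h1]; exact hk2
    nlinarith [h2]
  · intro j hj
    set a : ℕ := if 0 ≤ m then 0 else (-m).toNat with ha
    set b : ℕ := if 0 ≤ m then m.toNat else 0 with hb
    have hab : (b:ℤ) - (a:ℤ) = m := by
      simp only [ha, hb]; split_ifs with h <;> omega
    have hjb : b ≤ j := hj
    have hcast : ((j + a - b : ℕ) : ℤ) = (j : ℤ) + a - b := by omega
    have h2 : ((2:ℝ) ^ (j + a - b : ℕ)) = (2:ℝ) ^ ((j:ℤ) + a - b) := by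
      rw [← zpow_natCast (2:ℝ) (j + a - b), hcast]
    have key : (2:ℝ) ^ m * (2:ℝ) ^ ((j:ℤ) + a - b) = (2:ℝ) ^ (j:ℤ) := by
      rw [← zpow_add₀ (two_ne_zero)]
      congr 1
      omega
    rw [h2, div_div, key, ← zpow_natCast (2:ℝ) j]
    ring

lemma exists_threshold (s c : ℝ) (hs : 0 < s) (hc : 0 < c) :
    ∃ J : ℕ, ∀ j : ℕ, J ≤ j → s / 2 ^ j ≤ c := by
  obtain ⟨J, hJ⟩ := pow_unbounded_of_one_lt (s / c) (one_lt_two (α := ℝ))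
  refine ⟨J, fun j hj => ?_⟩
  have h1 : (2:ℝ) ^ J ≤ 2 ^ j := pow_le_pow_right₀ (by norm_num) hj
  have h2 : s / c < 2 ^ j := lt_of_lt_of_le hJ h1
  rw [div_lt_iff₀ hc] at h2
  rw [div_le_iff₀ (by positivity : (0:ℝ) < 2 ^ j)]
  nlinarith [h2]

/-- Mean porosity is invariant under conformal diffeomorphisms:
if `φ : W → ℝⁿ` is an injective `C¹` map with conformal (invertibly similar) derivative
on an open connected neighborhood `W` of `ξ`, `X` is `(α,p)`-mean porous at `ξ ∈ X`,
`φ ξ ∈ Y`, and `Y ∩ φ(W) ⊆ φ(X ∩ W)`, then `Y` is `(α,p)`-mean porous at `φ ξ`. -/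
theorem stmt4 {n : ℕ} (hn : 1 ≤ n)
    (X Y : Set (EuclideanSpace ℝ (Fin n))) (ξ : EuclideanSpace ℝ (Fin n))
    (W : Set (EuclideanSpace ℝ (Fin n)))
    (hWopen : IsOpen W) (hWconn : IsConnected W) (hξW : ξ ∈ W) (hξX : ξ ∈ X)
    (φ : EuclideanSpace ℝ (Fin n) → EuclideanSpace ℝ (Fin n))
    (D : EuclideanSpace ℝ (Fin n) → EuclideanSpace ℝ (Fin n) →L[ℝ] EuclideanSpace ℝ (Fin n))
    (hInj : Set.InjOn φ W)
    (hDeriv : ∀ x ∈ W, HasFDerivAt φ (D x) x)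
    (hConf : ∀ x ∈ W, IsConformalMap (D x))
    (α p : ℝ) (hα : 0 < α) (hp : 0 ≤ p)
    (hmp : MeanPorousAt X α p ξ)
    (hY1 : φ ξ ∈ Y) (hY2 : Y ∩ φ '' W ⊆ φ '' (X ∩ W)) :
    MeanPorousAt Y α p (φ ξ) := by
  haveI : Nontrivial (EuclideanSpace ℝ (Fin n)) := by
    apply Module.nontrivial_of_finrank_pos (R := ℝ)
    rw [finrank_euclideanSpace_fin]; omega
  obtain ⟨s, ⟨hs0, hs2⟩, β₀, hβ₀α, hXul⟩ := hmp
  obtain ⟨lam, hlam, hTnorm⟩ := conformal_norm (hConf ξ hξW)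
  set β' : ℝ := (α + β₀) / 2 with hβ'
  set β'' : ℝ := (α + β') / 2 with hβ''
  have hβ'β₀ : β' < β₀ := by rw [hβ']; linarith
  have hαβ' : α < β' := by rw [hβ']; linarith
  have hαβ'' : α < β'' := by rw [hβ'']; linarith
  have hβ''β' : β'' < β' := by rw [hβ'']; linarith
  have hβ'pos : 0 < β' := lt_trans hα hαβ'
  set ε : ℝ := min (lam / 2) (lam * (β₀ - β') / 4) with hε
  have hεpos : 0 < ε := lt_min (by linarith) (by nlinarith)
  have hεlam : ε ≤ lam / 2 := min_le_left _ _
  have hεβ : 2 * ε ≤ lam * (β₀ - β') / 2 := by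
    have h := min_le_right (lam / 2) (lam * (β₀ - β') / 4)
    rw [← hε] at h
    linarith only [h]
  -- differentiability estimate at ξ
  have hlittle := (hDeriv ξ hξW).isLittleO.def hεpos
  rw [Metric.eventually_nhds_iff] at hlittle
  obtain ⟨δ, hδpos, hδ⟩ := hlittle
  -- radius rbar
  obtain ⟨ε₁, hε₁pos, hε₁⟩ := Metric.isOpen_iff.mp hWopen ξ hξW
  obtain ⟨rbar, hrbarpos, hrbarε₁, hrbarδ⟩ :
      ∃ rbar : ℝ, 0 < rbar ∧ rbar < ε₁ ∧ rbar < δ :=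
    ⟨min ε₁ δ / 2, by positivity, by
      rcases min_cases ε₁ δ with ⟨h1, h2⟩ | ⟨h1, h2⟩ <;> rw [h1] <;> linarith, by
      rcases min_cases ε₁ δ with ⟨h1, h2⟩ | ⟨h1, h2⟩ <;> rw [h1] <;> linarith⟩
  have hrbarW : closedBall ξ rbar ⊆ W := fun z hz => hε₁ (by
    rw [mem_closedBall] at hz
    rw [mem_ball]
    linarith only [hz, hrbarε₁])
  obtain ⟨ρ, hρpos, hρ⟩ := loc_surj hn W hWopen φ D hInj hDeriv hConf ξ hξW rbar hrbarpos hrbarW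
  -- scale bookkeeping
  obtain ⟨s', a, b, hs'pos, hs'le, hscale⟩ := exists_scale lam s hlam hs0
  obtain ⟨J₂, hJ₂⟩ := exists_threshold s (min rbar (ρ / lam)) hs0
    (lt_min hrbarpos (by positivity))
  set J : ℕ := max (b + 1) J₂ with hJ
  -- main transfer
  have transfer : ∀ j : ℕ, J ≤ j → β₀ < por X ξ (s / 2 ^ j) →
      β'' < por Y (φ ξ) (s' / 2 ^ (j + a - b)) := by
    intro j hj hpor
    set r : ℝ := s / 2 ^ j with hr
    have hrpos : 0 < r := by positivity
    have hsm := hJ₂ j (le_trans (le_max_right _ _) hj)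
    have hrrbar : r ≤ rbar := le_trans hsm (min_le_left _ _)
    have hrρ : lam * r ≤ ρ := by
      have h1 : r ≤ ρ / lam := le_trans hsm (min_le_right _ _)
      rw [le_div_iff₀ hlam] at h1
      linarith only [h1]
    have hjb : b ≤ j := le_trans (by omega : b ≤ max (b+1) J₂) hj
    obtain ⟨c, hcβ₀, hc0, y, hy⟩ := lt_por_elim hpor
    have hcr : 0 < c * r := mul_pos (by linarith only [hcβ₀, hβ'β₀, hβ'pos]) hrpos
    have hyξ : ‖y - ξ‖ + c * r ≤ r := ball_subset_norm_add_le hcr (hy.trans diff_subset)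
    have hr'pos : 0 < lam * r := by positivity
    set y' := φ ξ + (D ξ) (y - ξ) with hy'
    have hsub : ball y' (β' * (lam * r)) ⊆ ball (φ ξ) (lam * r) \ Y := by
      intro z hz
      rw [mem_ball, dist_eq_norm] at hz
      have hβ'c : β' * (lam * r) < c * (lam * r) :=
        mul_lt_mul_of_pos_right (lt_trans hβ'β₀ hcβ₀) hr'pos
      have hzφξ : ‖z - φ ξ‖ < lam * r := by
        have h1 : ‖z - φ ξ‖ ≤ ‖z - y'‖ + ‖(D ξ) (y - ξ)‖ := by
          have he : z - φ ξ = (z - y') + (D ξ) (y - ξ) := by rw [hy']; abel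
          rw [he]; exact norm_add_le _ _
        rw [hTnorm] at h1
        have h3 : lam * ‖y - ξ‖ ≤ lam * (r - c * r) :=
          mul_le_mul_of_nonneg_left (by linarith only [hyξ]) hlam.le
        have h4 : lam * (r - c * r) = lam * r - c * (lam * r) := by ring
        linarith only [h1, hz, h3, h4, hβ'c, hr'pos,
          mul_pos hβ'pos hr'pos]
      constructor
      · rw [mem_ball, dist_eq_norm]; exact hzφξ
      · -- z ∉ Y
        intro hzY
        have hzρ : z ∈ ball (φ ξ) ρ := by
          rw [mem_ball, dist_eq_norm]
          exact lt_of_lt_of_le hzφξ hrρ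
        obtain ⟨x₂, hx₂cb, hφx₂⟩ := hρ hzρ
        obtain ⟨x, ⟨hxX, hxW⟩, hφx⟩ := hY2 ⟨hzY, x₂, hrbarW hx₂cb, hφx₂⟩
        have hxx₂ : x = x₂ := hInj hxW (hrbarW hx₂cb) (hφx.trans hφx₂.symm)
        have hxξ : ‖x - ξ‖ < δ := by
          rw [hxx₂]
          have h5 := mem_closedBall.mp hx₂cb
          rw [dist_eq_norm] at h5
          linarith only [h5, hrbarδ]
        have hdiff : ‖φ x - φ ξ - (D ξ) (x - ξ)‖ ≤ ε * ‖x - ξ‖ := by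
          have h6 := hδ (y := x) (by rw [dist_eq_norm]; exact hxξ)
          simpa using h6
        have hnn : (0:ℝ) ≤ ‖x - ξ‖ := norm_nonneg _
        have hxξ2 : ‖x - ξ‖ ≤ 2 * r := by
          have h5 : ‖(D ξ) (x - ξ)‖ ≤ ‖φ x - φ ξ‖ + ‖φ x - φ ξ - (D ξ) (x - ξ)‖ := by
            have h5' := norm_sub_le (φ x - φ ξ) (φ x - φ ξ - (D ξ) (x - ξ))
            have he : φ x - φ ξ - (φ x - φ ξ - (D ξ) (x - ξ)) = (D ξ) (x - ξ) := by abel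
            rw [he] at h5'
            exact h5'
          rw [hTnorm] at h5
          have h7 : ‖φ x - φ ξ‖ = ‖z - φ ξ‖ := by rw [hφx]
          have hprod : 0 ≤ (lam / 2 - ε) * ‖x - ξ‖ :=
            mul_nonneg (by linarith only [hεlam]) hnn
          have h8 : lam * ‖x - ξ‖ ≤ lam * (2 * r) := by
            nlinarith only [h5, h7, hdiff, hzφξ, hprod]
          exact le_of_mul_le_mul_left h8 hlam
        -- x lands in the hole
        have hxy : ‖x - y‖ < c * r := by
          have h6 : (D ξ) (x - y) = -(φ x - φ ξ - (D ξ) (x - ξ)) + (z - y') := by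
            rw [hy', hφx]
            simp only [map_sub]
            abel
          have h7 : lam * ‖x - y‖ ≤ ε * ‖x - ξ‖ + ‖z - y'‖ := by
            rw [← hTnorm, h6]
            calc ‖-(φ x - φ ξ - (D ξ) (x - ξ)) + (z - y')‖
                ≤ ‖φ x - φ ξ - (D ξ) (x - ξ)‖ + ‖z - y'‖ := by
                  refine le_trans (norm_add_le _ _) ?_
                  rw [norm_neg]
              _ ≤ ε * ‖x - ξ‖ + ‖z - y'‖ := by linarith only [hdiff]
          have h8 : ε * ‖x - ξ‖ ≤ ε * (2 * r) :=
            mul_le_mul_of_nonneg_left hxξ2 hεpos.le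
          have h9 : 2 * ε * r ≤ lam * (β₀ - β') / 2 * r :=
            mul_le_mul_of_nonneg_right hεβ hrpos.le
          have h10 : 0 ≤ lam * (β₀ - β') * r :=
            mul_nonneg (mul_nonneg hlam.le (by linarith only [hβ'β₀])) hrpos.le
          have h11 : lam * (β₀ * r) < lam * (c * r) := by
            nlinarith only [mul_pos (mul_pos hlam hrpos) (sub_pos.2 hcβ₀)]
          have h12 : lam * ‖x - y‖ < lam * (c * r) := by
            nlinarith only [h7, h8, h9, h10, h11, hz]
          exact lt_of_mul_lt_mul_left h12 hlam.le
        have h13 := hy (by rw [mem_ball, dist_eq_norm]; exact hxy)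
        exact h13.2 hxX
    have hle : β' ≤ por Y (φ ξ) (lam * r) := le_por hr'pos hβ'pos.le y' hsub
    rw [hscale j hjb]
    linarith only [hle, hβ''β']
  -- conclude via the counting lemma
  refine ⟨s', ⟨hs'pos, hs'le⟩, β'', hαβ'', ?_⟩
  unfold underlineA at hXul ⊢
  exact liminf_shift (fun j => β₀ < por X ξ (s / 2 ^ j))
    (fun j => β'' < por Y (φ ξ) (s' / 2 ^ j)) a b J (by omega) transfer p hp hXul
end

section
/- Let E be a finite set with at least two elements, let X ⊆ ℝⁿ be compact and equal to the closure of its interior, and for each e ∈ E let φ_e(x) = a_e + r_e·x with a_e ∈ ℝⁿ and r_e ∈ (0,1) (rotation-free contracting similarities) satisfy φ_e(X) ⊆ X and the Open Set Condition: φ_a(interior X) ∩ φ_b(interior X) = ∅ for a ≠ b. Let J = { lim_{m→∞} φ_{ω₁}∘⋯∘φ_{ω_m}(x₀) : ω ∈ E^ℕ } (x₀ ∈ X arbitrary; the limit exists and does not depend on x₀). Suppose there is a set V ⊆ S^{n-1} such that for every x ∈ ⋃_{e∈E} φ_e(X) and every unit vector v ∈ S^{n-1} ∖ V one has ( interior(X)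 ∩ (x + ℝ·v) ) ∖ ⋃_{e∈E} φ_e(X) ≠ ∅. Then for every v ∈ S^{n-1} ∖ V the limit set J is v-directed porous. -/
open Metric Set Filter

/-- Directed porosity of `A` at `x` at scale `r` in direction `v`: the supremum of all
`c ≥ 0` such that some open ball of radius `c·r` centered on the line `x + ℝ·v` is
contained in `B(x,r) ∖ A`. -/
noncomputable def porDir {V : Type*} [NormedAddCommGroup V] [NormedSpace ℝ V]
    (v : V) (A : Set V) (x : V) (r : ℝ) : ℝ :=
  sSup {c : ℝ | 0 ≤ c ∧ ∃ t : ℝ,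
    Metric.ball (x + t • v) (c * r) ⊆ Metric.ball x r \ A}

/-- `A` is `v`-directed porous. -/
def DirectedPorous {V : Type*} [NormedAddCommGroup V] [NormedSpace ℝ V]
    (v : V) (A : Set V) : Prop :=
  ∃ c ∈ Set.Ioo (0 : ℝ) 1, ∃ r₀ > (0 : ℝ), ∀ x ∈ A, ∀ r ∈ Set.Ioo (0 : ℝ) r₀,
    c ≤ porDir v A x r

/-!
Write `K = ⋃ e, φ e '' X` and `O = interior X \ K`. The hypothesis puts a point of the open
set `O` on the line through every point of `K` in direction `v`; by compactness of `K` these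
holes can be taken to be balls of one radius `ρ` centred on the line at distance at most `T`.
A point `x` of the limit set lies in `φ_w '' K` for every prefix `w` of its code, and `φ_w`
maps the hole of `z = φ_w⁻¹ x` to a ball of radius `r_w * ρ` centred on the line through `x`,
at distance at most `r_w * T` from `x`. That ball misses the limit set: a cylinder
`φ_u '' X` with `u ≠ w` of the same length lies in the closure of `φ_u '' interior X`, which
by the open set condition misses the open set `φ_w '' interior X`, while `φ_w '' K` misses
`φ_w '' O` by injectivity. Choosing the length of `w` so that `r_w` is comparable to the
scale `s` gives a hole of radius at least `c * s` with `c` independent of `x` and `s`.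
-/

open Topology

lemma le_porDir {V : Type*} [NormedAddCommGroup V] [NormedSpace ℝ V] [Nontrivial V]
    {v x : V} {A : Set V} {ρ c t : ℝ} (hρ : 0 < ρ) (hc : 0 ≤ c)
    (h : ball (x + t • v) (c * ρ) ⊆ ball x ρ \ A) : c ≤ porDir v A x ρ := by
  refine le_csSup ⟨2, fun c' ⟨hc', t', hsub⟩ => ?_⟩ ⟨hc, t, h⟩
  by_contra! h2
  -- two points of the small ball at distance `c' * ρ > 2 * ρ` cannot both lie in `ball x ρ`
  set y := x + t' • v
  obtain ⟨w, hw⟩ := exists_norm_eq V (by positivity : 0 ≤ c' * ρ / 2)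
  have hmem : ∀ w' : V, ‖w'‖ = c' * ρ / 2 → dist (y + w') x < ρ := fun w' hw' =>
    (hsub (by simpa [hw'] using half_lt_self (by positivity : 0 < c' * ρ))).1
  have h₁ := hmem w hw
  have h₂ := hmem (-w) (by rw [norm_neg, hw])
  have h₃ : dist (y + w) (y + -w) = c' * ρ := by
    rw [dist_add_left, dist_eq_norm, sub_neg_eq_add, ← two_smul ℝ, norm_smul, hw, Real.norm_two]
    ring
  have := dist_triangle_right (y + w) (y + -w) x
  nlinarith

lemma IsCompact.exists_forall_ball_add_subset {V : Type*} [SeminormedAddCommGroup V]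
    {K O D : Set V} (hK : IsCompact K) (hO : IsOpen O)
    (h : ∀ z ∈ K, ∃ y ∈ D, z + y ∈ O) :
    ∃ ρ > 0, ∃ T ≥ 0, ∀ z ∈ K, ∃ y ∈ D, ‖y‖ ≤ T ∧ ball (z + y) ρ ⊆ O := by
  have h' : ∀ z ∈ K, ∃ y ∈ D, ∃ ε > 0, ball (z + y) (2 * ε) ⊆ O := fun z hz => by
    obtain ⟨y, hyD, hyO⟩ := h z hz
    obtain ⟨ε, hε, hball⟩ := Metric.isOpen_iff.1 hO _ hyO
    exact ⟨y, hyD, ε / 2, half_pos hε, by rwa [mul_div_cancel₀ _ two_ne_zero]⟩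
  choose! y hyD ε hε hball using h'
  obtain ⟨F, hFK, hcover⟩ :=
    hK.elim_nhds_subcover (fun z => ball z (ε z)) fun z hz => ball_mem_nhds z (hε z hz)
  obtain ⟨ρ, hρε, hρ⟩ : ∃ ρ, (∀ z ∈ F, ρ < ε z) ∧ 0 < ρ :=
    (((eventually_all_finset F).2 fun z hz =>
      nhdsWithin_le_nhds (gt_mem_nhds (hε z (hFK z hz)))).and
      (self_mem_nhdsWithin : Ioi (0 : ℝ) ∈ 𝓝[>] 0)).exists
  refine ⟨ρ, hρ, ∑ z ∈ F, ‖y z‖, by positivity, fun z hz => ?_⟩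
  obtain ⟨z', hz'F, hzz'⟩ := mem_iUnion₂.1 (hcover hz)
  refine ⟨y z', hyD z' (hFK z' hz'F), Finset.single_le_sum (fun _ _ => norm_nonneg _) hz'F,
    (ball_subset_ball' ?_).trans (hball z' (hFK z' hz'F))⟩
  rw [dist_add_right]
  linarith [mem_ball.1 hzz', hρε z' hz'F]

lemma exists_lt_and_mul_le_of_ratio_bounds {R : ℕ → ℝ} {q₀ q₁ s : ℝ} (hq₀ : 0 ≤ q₀)
    (hq₁ : q₁ ∈ Ico 0 1) (hs : 0 < s) (hR₀ : s ≤ R 0)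
    (hstep : ∀ m, q₀ * R m ≤ R (m + 1) ∧ R (m + 1) ≤ q₁ * R m) :
    ∃ m, R m < s ∧ q₀ * s ≤ R m := by
  have hdecay : ∀ m, R m ≤ q₁ ^ m * R 0 := fun m => by
    induction m with
    | zero => simp
    | succ m ih =>
      calc R (m + 1) ≤ q₁ * R m := (hstep m).2
        _ ≤ q₁ * (q₁ ^ m * R 0) := mul_le_mul_of_nonneg_left ih hq₁.1
        _ = q₁ ^ (m + 1) * R 0 := by ring
  have hex : ∃ m, R m < s := by
    have hlim := (tendsto_pow_atTop_nhds_zero_of_lt_one hq₁.1 hq₁.2).mul_const (R 0)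
    rw [zero_mul] at hlim
    obtain ⟨m, hm⟩ := (hlim.eventually (gt_mem_nhds hs)).exists
    exact ⟨m, (hdecay m).trans_lt hm⟩
  classical
  obtain ⟨k, hk⟩ : ∃ k, Nat.find hex = k + 1 :=
    Nat.exists_eq_succ_of_ne_zero fun h => (Nat.find_spec hex).not_ge (h ▸ hR₀)
  refine ⟨k + 1, hk ▸ Nat.find_spec hex, ?_⟩
  have hk_ge : s ≤ R k := not_lt.1 (Nat.find_min hex (by omega))
  exact (mul_le_mul_of_nonneg_left hk_ge hq₀).trans (hstep k).1

section Words

variable {α E : Type*}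

def wordMap (φ : E → α → α) (l : List E) : α → α :=
  l.foldr (fun e g => φ e ∘ g) id

def prefixWord (ω : ℕ → E) (m : ℕ) : List E :=
  List.ofFn fun i : Fin m => ω i

def limitSet [TopologicalSpace α] (φ : E → α → α) (x₀ : α) : Set α :=
  {x | ∃ ω : ℕ → E, Tendsto (fun m => wordMap φ (prefixWord ω m) x₀) atTop (𝓝 x)}

variable {φ : E → α → α}

@[simp] lemma wordMap_cons (e : E) (l : List E) : wordMap φ (e :: l) = φ e ∘ wordMap φ l := rfl

lemma wordMap_append (l₁ l₂ : List E) : wordMap φ (l₁ ++ l₂) = wordMap φ l₁ ∘ wordMap φ l₂ := by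
  induction l₁ with
  | nil => rfl
  | cons e l ih => rw [List.cons_append, wordMap_cons, wordMap_cons, ih]; rfl

@[simp] lemma length_prefixWord (ω : ℕ → E) (m : ℕ) : (prefixWord ω m).length = m :=
  List.length_ofFn

lemma prefixWord_add (ω : ℕ → E) (m n : ℕ) :
    prefixWord ω (m + n) = prefixWord ω m ++ prefixWord (fun i => ω (m + i)) n := by
  simp [prefixWord, List.ofFn_add]

lemma prefixWord_succ (ω : ℕ → E) (m : ℕ) : prefixWord ω (m + 1) = prefixWord ω m ++ [ω m] := by
  rw [prefixWord_add]
  simp [prefixWord]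

lemma image_wordMap_subset {X : Set α} (hmaps : ∀ e, φ e '' X ⊆ X) (l : List E) :
    wordMap φ l '' X ⊆ X := by
  induction l with
  | nil => simp [wordMap]
  | cons e l ih =>
    rw [wordMap_cons, image_comp]
    exact (image_mono ih).trans (hmaps e)

variable [TopologicalSpace α] {X : Set α}

lemma isOpenEmbedding_wordMap (hemb : ∀ e, IsOpenEmbedding (φ e)) (l : List E) :
    IsOpenEmbedding (wordMap φ l) := by
  induction l with
  | nil => exact .id
  | cons e l ih => exact (hemb e).comp ih

lemma image_wordMap_interior_subset (hemb : ∀ e, IsOpenEmbedding (φ e))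
    (hmaps : ∀ e, φ e '' X ⊆ X) (l : List E) : wordMap φ l '' interior X ⊆ interior X :=
  interior_maximal ((image_mono interior_subset).trans (image_wordMap_subset hmaps l))
    ((isOpenEmbedding_wordMap hemb l).isOpenMap _ isOpen_interior)

lemma disjoint_image_wordMap_interior (hemb : ∀ e, IsOpenEmbedding (φ e))
    (hmaps : ∀ e, φ e '' X ⊆ X)
    (hOSC : ∀ e₁ e₂ : E, e₁ ≠ e₂ → Disjoint (φ e₁ '' interior X) (φ e₂ '' interior X)) :
    ∀ {u w : List E}, u.length = w.length → u ≠ w →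
      Disjoint (wordMap φ u '' interior X) (wordMap φ w '' interior X)
  | [], [], _, hne => absurd rfl hne
  | e₁ :: u, e₂ :: w, hlen, hne => by
    simp only [wordMap_cons, image_comp]
    by_cases he : e₁ = e₂
    · subst he
      have hu : u ≠ w := fun h => hne (h ▸ rfl)
      exact (disjoint_image_iff (hemb e₁).injective).2
        (disjoint_image_wordMap_interior hemb hmaps hOSC (by simpa using hlen) hu)
    · exact (hOSC e₁ e₂ he).mono (image_mono (image_wordMap_interior_subset hemb hmaps u))
        (image_mono (image_wordMap_interior_subset hemb hmaps w))

lemma disjoint_image_wordMap_hole (hXreg : X = closure (interior X))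
    (hemb : ∀ e, IsOpenEmbedding (φ e)) (hmaps : ∀ e, φ e '' X ⊆ X)
    (hOSC : ∀ e₁ e₂ : E, e₁ ≠ e₂ → Disjoint (φ e₁ '' interior X) (φ e₂ '' interior X))
    {u w : List E} (hlen : u.length = w.length) :
    Disjoint (wordMap φ u '' ⋃ e, φ e '' X) (wordMap φ w '' (interior X \ ⋃ e, φ e '' X)) := by
  by_cases huw : u = w
  · subst huw
    exact (disjoint_image_iff (isOpenEmbedding_wordMap hemb u).injective).2 disjoint_sdiff_right
  have hclosure : wordMap φ u '' ⋃ e, φ e '' X ⊆ closure (wordMap φ u '' interior X) :=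
    calc wordMap φ u '' ⋃ e, φ e '' X ⊆ wordMap φ u '' X := image_mono (iUnion_subset hmaps)
      _ ⊆ closure (wordMap φ u '' interior X) := by
        nth_rewrite 1 [hXreg]
        exact image_closure_subset_closure_image (isOpenEmbedding_wordMap hemb u).continuous
  exact (((disjoint_image_wordMap_interior hemb hmaps hOSC hlen huw).closure_left
    ((isOpenEmbedding_wordMap hemb w).isOpenMap _ isOpen_interior)).mono hclosure
    (image_mono sdiff_subset))

lemma mem_image_wordMap_of_tendsto [T2Space α] [Finite E] (hXc : IsCompact X)
    (hemb : ∀ e, IsOpenEmbedding (φ e)) (hmaps : ∀ e, φ e '' X ⊆ X) {x₀ : α} (hx₀ : x₀ ∈ X)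
    {ω : ℕ → E} {p : α} (h : Tendsto (fun m => wordMap φ (prefixWord ω m) x₀) atTop (𝓝 p))
    (m : ℕ) : p ∈ wordMap φ (prefixWord ω m) '' ⋃ e, φ e '' X := by
  have hclosed : IsClosed (wordMap φ (prefixWord ω m) '' ⋃ e, φ e '' X) :=
    ((isCompact_iUnion fun e => hXc.image (hemb e).continuous).image
      (isOpenEmbedding_wordMap hemb _).continuous).isClosed
  refine hclosed.mem_of_tendsto h (eventually_atTop.2 ⟨m + 1, fun k hk => ?_⟩)
  obtain ⟨j, rfl⟩ := Nat.exists_eq_add_of_le hk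
  rw [prefixWord_add, prefixWord_succ, wordMap_append, wordMap_append]
  exact mem_image_of_mem _ (mem_iUnion.2 ⟨ω m, mem_image_of_mem _
    (image_wordMap_subset hmaps _ ⟨x₀, hx₀, rfl⟩)⟩)

lemma disjoint_limitSet_image_wordMap_hole [T2Space α] [Finite E] (hXc : IsCompact X)
    (hXreg : X = closure (interior X)) (hemb : ∀ e, IsOpenEmbedding (φ e))
    (hmaps : ∀ e, φ e '' X ⊆ X)
    (hOSC : ∀ e₁ e₂ : E, e₁ ≠ e₂ → Disjoint (φ e₁ '' interior X) (φ e₂ '' interior X))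
    {x₀ : α} (hx₀ : x₀ ∈ X) (w : List E) :
    Disjoint (limitSet φ x₀) (wordMap φ w '' (interior X \ ⋃ e, φ e '' X)) := by
  refine disjoint_left.2 fun p ⟨σ, hσ⟩ hp => ?_
  have hlen : (prefixWord σ w.length).length = w.length := length_prefixWord σ _
  exact disjoint_left.1 (disjoint_image_wordMap_hole hXreg hemb hmaps hOSC hlen)
    (mem_image_wordMap_of_tendsto hXc hemb hmaps hx₀ hσ w.length) hp

end Words

section Affine

variable {V E : Type*} [NormedAddCommGroup V] [NormedSpace ℝ V]

lemma isOpenEmbedding_add_smul (b : V) {c : ℝ} (hc : c ≠ 0) :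
    IsOpenEmbedding fun x : V => b + c • x :=
  (Homeomorph.addLeft b).isOpenEmbedding.comp (Homeomorph.smulOfNeZero c hc).isOpenEmbedding

lemma image_add_smul_ball (b x : V) {c : ℝ} (hc : 0 < c) (ρ : ℝ) :
    (fun y => b + c • y) '' ball x ρ = ball (b + c • x) (c * ρ) := by
  have : (fun y : V => b + c • y) = (b +ᵥ ·) ∘ (c • ·) := rfl
  rw [this, image_comp, image_smul, _root_.smul_ball hc.ne', image_vadd, vadd_ball,
    Real.norm_of_nonneg hc.le]
  rfl

variable {a : E → V} {r : E → ℝ} {φ : E → V → V}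

lemma wordMap_add (hφ : ∀ e x, φ e x = a e + r e • x) (l : List E) (x y : V) :
    wordMap φ l (x + y) = wordMap φ l x + (l.map r).prod • y := by
  induction l with
  | nil => simp [wordMap]
  | cons e l ih =>
    simp only [wordMap_cons, Function.comp_apply, hφ, ih, List.map_cons, List.prod_cons,
      smul_add, mul_smul, add_assoc]

lemma image_wordMap_ball (hφ : ∀ e x, φ e x = a e + r e • x) (hr : ∀ e, 0 < r e)
    (l : List E) (x : V) (ρ : ℝ) :
    wordMap φ l '' ball x ρ = ball (wordMap φ l x) ((l.map r).prod * ρ) := by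
  have hprod : 0 < (l.map r).prod := List.prod_pos (by simpa using fun e _ => hr e)
  have : wordMap φ l = fun y => wordMap φ l 0 + (l.map r).prod • y :=
    funext fun y => by simpa using wordMap_add hφ l 0 y
  rw [this, image_add_smul_ball _ _ hprod]

lemma prod_map_prefixWord_succ (ω : ℕ → E) (m : ℕ) :
    ((prefixWord ω (m + 1)).map r).prod = ((prefixWord ω m).map r).prod * r (ω m) := by
  simp [prefixWord_succ]

end Affine

section SelfSimilar

variable {V E : Type*} [NormedAddCommGroup V] [NormedSpace ℝ V] {X : Set V} {a : E → V}
  {r : E → ℝ} {φ : E → V → V} {x₀ v : V}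

lemma le_porDir_limitSet [Nontrivial V] [Finite E] (hXc : IsCompact X)
    (hXreg : X = closure (interior X)) (hr : ∀ e, 0 < r e) (hφ : ∀ e x, φ e x = a e + r e • x)
    (hemb : ∀ e, IsOpenEmbedding (φ e)) (hmaps : ∀ e, φ e '' X ⊆ X)
    (hOSC : ∀ e₁ e₂ : E, e₁ ≠ e₂ → Disjoint (φ e₁ '' interior X) (φ e₂ '' interior X))
    (hx₀ : x₀ ∈ X) {w : List E} {z : V} {ρ T t s c : ℝ}
    (hzt : ball (z + t • v) ρ ⊆ interior X \ ⋃ e, φ e '' X) (ht : ‖t • v‖ ≤ T) (hs : 0 < s)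
    (hc : 0 ≤ c) (hs_gt : (w.map r).prod * (T + ρ) < s) (hcs : c * s ≤ (w.map r).prod * ρ) :
    c ≤ porDir v (limitSet φ x₀) (wordMap φ w z) s := by
  have hR : 0 < (w.map r).prod := List.prod_pos (by simpa using fun e _ => hr e)
  refine le_porDir (t := (w.map r).prod * t) hs hc (subset_sdiff.2 ⟨?_, ?_⟩)
  · refine ball_subset_ball' ?_
    rw [dist_self_add_left, mul_smul, norm_smul, Real.norm_of_nonneg hR.le]
    nlinarith
  · refine (disjoint_limitSet_image_wordMap_hole hXc hXreg hemb hmaps hOSC hx₀ w).symm.mono_left ?_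
    calc ball _ (c * s) ⊆ ball _ ((w.map r).prod * ρ) := ball_subset_ball hcs
      _ = wordMap φ w '' ball (z + t • v) ρ := by
        rw [image_wordMap_ball hφ hr, wordMap_add hφ, mul_smul]
      _ ⊆ _ := image_mono hzt

theorem directedPorous_limitSet [Finite E] [Nonempty E] (hXc : IsCompact X)
    (hXreg : X = closure (interior X)) (hr : ∀ e, r e ∈ Ioo (0 : ℝ) 1)
    (hφ : ∀ e x, φ e x = a e + r e • x) (hmaps : ∀ e, φ e '' X ⊆ X)
    (hOSC : ∀ e₁ e₂ : E, e₁ ≠ e₂ → Disjoint (φ e₁ '' interior X) (φ e₂ '' interior X))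
    (hx₀ : x₀ ∈ X) (hv : v ≠ 0)
    (hholes : ∀ z ∈ ⋃ e, φ e '' X, ∃ t : ℝ, z + t • v ∈ interior X \ ⋃ e, φ e '' X) :
    DirectedPorous v (limitSet φ x₀) := by
  have : Nontrivial V := ⟨⟨v, 0, hv⟩⟩
  have hemb : ∀ e, IsOpenEmbedding (φ e) := fun e => by
    simpa only [← funext (hφ e)] using isOpenEmbedding_add_smul (a e) (hr e).1.ne'
  have hK : IsCompact (⋃ e, φ e '' X) := isCompact_iUnion fun e => hXc.image (hemb e).continuous
  obtain ⟨ρ, hρ, T, hT, hball⟩ := hK.exists_forall_ball_add_subset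
    (isOpen_interior.sdiff hK.isClosed) (D := range (· • v))
    fun z hz => let ⟨t, ht⟩ := hholes z hz; ⟨t • v, mem_range_self t, ht⟩
  obtain ⟨e₀, he₀⟩ := Finite.exists_min r
  obtain ⟨e₁, he₁⟩ := Finite.exists_max r
  have hc : ρ * r e₀ / (T + ρ) < 1 := by
    rw [div_lt_one (by positivity)]
    nlinarith [(hr e₀).2]
  refine ⟨ρ * r e₀ / (T + ρ), ⟨by positivity [(hr e₀).1], hc⟩, T + ρ, by positivity,
    fun x ⟨ω, hω⟩ s hs => ?_⟩
  set R : ℕ → ℝ := fun m => ((prefixWord ω m).map r).prod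
  -- the scale `m` at which the copy of a hole is seen: `R m * (T + ρ) < s ≤ R m * (T + ρ) / r e₀`
  obtain ⟨m, hm_lt, hm_le⟩ := exists_lt_and_mul_le_of_ratio_bounds (R := fun m => R m * (T + ρ))
    (hr e₀).1.le ⟨(hr e₁).1.le, (hr e₁).2⟩ hs.1 (by simpa [R, prefixWord] using hs.2.le)
    fun m => by
      have hsucc : R (m + 1) * (T + ρ) = r (ω m) * (R m * (T + ρ)) := by
        simp only [R, prod_map_prefixWord_succ]; ring
      have hRβ : 0 ≤ R m * (T + ρ) :=
        mul_nonneg (List.prod_nonneg (by simpa using fun e _ => (hr e).1.le)) (by positivity)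
      rw [hsucc]
      exact ⟨mul_le_mul_of_nonneg_right (he₀ _) hRβ, mul_le_mul_of_nonneg_right (he₁ _) hRβ⟩
  obtain ⟨z, hz, rfl⟩ := mem_image_wordMap_of_tendsto hXc hemb hmaps hx₀ hω m
  obtain ⟨_, ⟨t, rfl⟩, ht, hzt⟩ := hball z hz
  refine le_porDir_limitSet hXc hXreg (fun e => (hr e).1) hφ hemb hmaps hOSC hx₀ hzt ht hs.1
    (by positivity [(hr e₀).1]) hm_lt ?_
  rw [div_mul_eq_mul_div, div_le_iff₀ (by positivity)]
  nlinarith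

end SelfSimilar

/-- Let `{φ_e}` be a finite IFS of rotation-free contracting similarities
`φ_e x = a_e + r_e • x` on a compact set `X = closure(interior X)` satisfying the Open Set
Condition, with limit set `J`. If for every `x ∈ ⋃ₑ φₑ(X)` and every unit vector
`v ∉ V` the line `x + ℝ·v` meets `interior X` outside `⋃ₑ φₑ(X)`, then `J` is
`v`-directed porous for every unit vector `v ∉ V`. -/
theorem stmt7 {n : ℕ} {E : Type*} [Finite E] [Nontrivial E]
    (X : Set (EuclideanSpace ℝ (Fin n)))
    (hXc : IsCompact X) (hXreg : X = closure (interior X))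
    (a : E → EuclideanSpace ℝ (Fin n)) (r : E → ℝ)
    (hr : ∀ e, r e ∈ Set.Ioo (0 : ℝ) 1)
    (φ : E → EuclideanSpace ℝ (Fin n) → EuclideanSpace ℝ (Fin n))
    (hφ : ∀ e x, φ e x = a e + r e • x)
    (hmaps : ∀ e, φ e '' X ⊆ X)
    (hOSC : ∀ e₁ e₂ : E, e₁ ≠ e₂ → Disjoint (φ e₁ '' interior X) (φ e₂ '' interior X))
    (x₀ : EuclideanSpace ℝ (Fin n)) (hx₀ : x₀ ∈ X)
    (J : Set (EuclideanSpace ℝ (Fin n)))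
    (hJ : J = {x | ∃ ω : ℕ → E, Filter.Tendsto
      (fun m => (List.ofFn fun i : Fin m => ω i).foldr (fun e g => φ e ∘ g) id x₀)
      Filter.atTop (nhds x)})
    (V : Set (EuclideanSpace ℝ (Fin n)))
    (hV : ∀ x ∈ ⋃ e : E, φ e '' X, ∀ v : EuclideanSpace ℝ (Fin n), ‖v‖ = 1 → v ∉ V →
      ((interior X ∩ {y | ∃ t : ℝ, y = x + t • v}) \ ⋃ e : E, φ e '' X).Nonempty) :
    ∀ v : EuclideanSpace ℝ (Fin n), ‖v‖ = 1 → v ∉ V → DirectedPorous v J := by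
  intro v hv hvV
  obtain rfl : J = limitSet φ x₀ := hJ
  refine directedPorous_limitSet hXc hXreg hr hφ hmaps hOSC hx₀ (by rintro rfl; simp at hv)
    fun z hz => ?_
  obtain ⟨_, ⟨hy, t, rfl⟩, hyK⟩ := hV z hz v hv hvV
  exact ⟨t, hy, hyK⟩
end

section
/- Let I ⊆ E be co-finite, i.e. E ∖ I is finite. Then closure(J_I) is not porous in ℂ; in particular, the limit set J_I is not porous. -/
open Metric Set Filter

/-- The Gaussian integers with positive real part, as a subset of `ℂ`. -/
def Egauss : Set ℂ :=
  {w | ∃ m n : ℤ, 1 ≤ m ∧ w = (m : ℂ) + (n : ℂ) * Complex.I}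

/-- The composition `φ_{ω₀} ∘ ⋯ ∘ φ_{ω_{m-1}}` of the continued fraction maps
`φ_e z = 1/(e+z)`. -/
noncomputable def cfComp (ω : ℕ → ℂ) (m : ℕ) : ℂ → ℂ :=
  (List.ofFn fun i : Fin m => ω i).foldr (fun e g => (fun z => (e + z)⁻¹) ∘ g) id

/-- The limit set of the complex continued fraction system with alphabet `I ⊆ ℂ`. -/
def cfLimitSet (I : Set ℂ) : Set ℂ :=
  {z | ∃ ω : ℕ → ℂ, (∀ k, ω k ∈ I) ∧
    Filter.Tendsto (fun m => cfComp ω m 0) Filter.atTop (nhds z)}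

lemma inv_diff (k a b : ℂ) (ha : k + a ≠ 0) (hb : k + b ≠ 0) :
    (k + a)⁻¹ - (k + b)⁻¹ = (b - a) * ((k + a)⁻¹ * (k + b)⁻¹) := by
  field_simp
  ring

lemma cfComp_succ (ω : ℕ → ℂ) (m : ℕ) (z : ℂ) :
    cfComp ω (m + 1) z = (ω 0 + cfComp (fun k => ω (k + 1)) m z)⁻¹ := by
  simp [cfComp, List.ofFn_succ, Function.comp]

/-- The orbit of `0` under iteration of `z ↦ (K+z)⁻¹`. -/
noncomputable def aK (K : ℕ) (n : ℕ) : ℂ := cfComp (fun _ => (K:ℂ)) n 0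

lemma aK_zero (K : ℕ) : aK K 0 = 0 := rfl

lemma aK_succ (K : ℕ) (n : ℕ) : aK K (n+1) = ((K:ℂ) + aK K n)⁻¹ :=
  cfComp_succ _ n 0

section
variable {K : ℕ} (hK : 200 ≤ K)

include hK

lemma abs_K_add_lb {a : ℂ} (ha : ‖a‖ ≤ 1) :
    (K:ℝ) - 1 ≤ ‖(K:ℂ) + a‖ := by
  have hKr : (200:ℝ) ≤ (K:ℝ) := by exact_mod_cast hK
  have h2 := norm_add_le ((K:ℂ) + a) (-a)
  simp only [add_neg_cancel_right, norm_neg] at h2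
  rw [Complex.norm_natCast] at h2
  linarith

lemma K_add_ne {a : ℂ} (ha : ‖a‖ ≤ 1) : (K:ℂ) + a ≠ 0 := by
  intro h
  have hKr : (200:ℝ) ≤ (K:ℝ) := by exact_mod_cast hK
  have := abs_K_add_lb hK ha
  rw [h] at this; simp at this; linarith

lemma aK_norm_le : ∀ m, ‖aK K m‖ ≤ 1 := by
  intro m
  induction m with
  | zero => simp [aK_zero]
  | succ n ih =>
    rw [aK_succ, norm_inv]
    have hKr : (200:ℝ) ≤ (K:ℝ) := by exact_mod_cast hK
    have h1 := abs_K_add_lb hK ih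
    calc (‖(K:ℂ) + aK K n‖)⁻¹ ≤ ((K:ℝ) - 1)⁻¹ := inv_anti₀ (by linarith) h1
      _ ≤ 1 := by rw [inv_le_one_iff₀]; right; linarith

lemma aK_dist (m : ℕ) : dist (aK K m) (aK K (m+1)) ≤ 1 * (1/4)^m := by
  have hKr : (200:ℝ) ≤ (K:ℝ) := by exact_mod_cast hK
  induction m with
  | zero =>
    rw [aK_succ, aK_zero, Complex.dist_eq]
    simp only [zero_sub, norm_neg, norm_inv, pow_zero, mul_one]
    have h1 : (K:ℝ) - 1 ≤ ‖(K:ℂ) + aK K 0‖ :=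
      abs_K_add_lb hK (by simp [aK_zero])
    calc (‖(K:ℂ) + aK K 0‖)⁻¹
        ≤ ((K:ℝ) - 1)⁻¹ := inv_anti₀ (by linarith) h1
      _ ≤ 1 := by rw [inv_le_one_iff₀]; right; linarith
  | succ n ih =>
    have hA : ‖aK K n‖ ≤ 1 := aK_norm_le hK n
    have hB : ‖aK K (n+1)‖ ≤ 1 := aK_norm_le hK (n+1)
    have hne1 : ((K:ℂ) + aK K n) ≠ 0 := K_add_ne hK hA
    have hne2 : ((K:ℂ) + aK K (n+1)) ≠ 0 := K_add_ne hK hB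
    rw [Complex.dist_eq] at ih ⊢
    have e1 : ‖aK K (n+1) - aK K (n+1+1)‖
        = ‖(aK K (n+1) - aK K n) * (((K:ℂ) + aK K n)⁻¹ * ((K:ℂ) + aK K (n+1))⁻¹)‖ := by
      rw [← inv_diff (K:ℂ) (aK K n) (aK K (n+1)) hne1 hne2, aK_succ K (n+1), aK_succ K n]
    rw [e1, norm_mul, norm_mul, norm_inv, norm_inv]
    have l1 := abs_K_add_lb hK hA
    have l2 := abs_K_add_lb hK hB
    have hq : (‖(K:ℂ) + aK K n‖)⁻¹ * (‖(K:ℂ) + aK K (n+1)‖)⁻¹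
        ≤ (1/4) := by
      calc (‖(K:ℂ) + aK K n‖)⁻¹ * (‖(K:ℂ) + aK K (n+1)‖)⁻¹
          ≤ ((K:ℝ)-1)⁻¹ * ((K:ℝ)-1)⁻¹ := by
            apply mul_le_mul (inv_anti₀ (by linarith) l1) (inv_anti₀ (by linarith) l2)
              (inv_nonneg.mpr (norm_nonneg _)) (inv_nonneg.mpr (by linarith))
        _ ≤ (1/4) := by
            rw [← one_div, div_mul_div_comm, one_mul, div_le_div_iff₀ (by nlinarith) (by norm_num)]
            nlinarith
    have habsba : ‖aK K (n+1) - aK K n‖ ≤ 1 * (1/4)^n := by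
      rw [← norm_neg]; simpa [neg_sub, aK_succ K n] using ih
    calc ‖aK K (n+1) - aK K n‖
          * ((‖(K:ℂ) + aK K n‖)⁻¹ * (‖(K:ℂ) + aK K (n+1)‖)⁻¹)
        ≤ (1 * (1/4)^n) * (1/4) := by
          apply mul_le_mul habsba hq (by positivity) (by positivity)
      _ = 1 * (1/4)^(n+1) := by ring

lemma aK_exists_lim : ∃ x : ℂ, Tendsto (fun m => aK K m) atTop (nhds x) := by
  have hc : CauchySeq (aK K) := cauchySeq_of_le_geometric (1/4) 1 (by norm_num) (aK_dist hK)
  exact cauchySeq_tendsto_of_complete hc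

end


lemma fixed_pt_bounds {K : ℕ} (hK : 200 ≤ K) {x : ℂ}
    (habs : ‖x‖ ≤ 1) (hfix : x = ((K:ℂ) + x)⁻¹) :
    1/(4*(K:ℝ)) ≤ x.re ∧ ‖x‖ ≤ 2/(K:ℝ) := by
  have hKr : (200:ℝ) ≤ (K:ℝ) := by exact_mod_cast hK
  have hlb : (K:ℝ) - 1 ≤ ‖(K:ℂ) + x‖ := by
    have h2 := norm_add_le ((K:ℂ) + x) (-x)
    simp only [add_neg_cancel_right, norm_neg] at h2
    rw [Complex.norm_natCast] at h2
    linarith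
  have hub : ‖(K:ℂ) + x‖ ≤ (K:ℝ) + 1 := by
    have h2 := norm_add_le ((K:ℂ)) x
    rw [Complex.norm_natCast] at h2
    linarith
  have hne : ((K:ℂ) + x) ≠ 0 := by
    intro h; rw [h] at hlb; simp at hlb; linarith
  have habsx : ‖x‖ = (‖(K:ℂ) + x‖)⁻¹ := by
    conv_lhs => rw [hfix]
    rw [norm_inv]
  constructor
  · have hre : x.re = ((K:ℝ) + x.re) / Complex.normSq ((K:ℂ) + x) := by
      conv_lhs => rw [hfix]
      rw [Complex.inv_re, Complex.add_re, Complex.natCast_re]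
    have hN : Complex.normSq ((K:ℂ) + x) = ‖(K:ℂ) + x‖^2 :=
      (Complex.sq_norm _).symm
    set N := Complex.normSq ((K:ℂ) + x) with hNdef
    have hN1 : ((K:ℝ)-1)^2 ≤ N := by rw [hN]; nlinarith [norm_nonneg ((K:ℂ)+x)]
    have hN2 : N ≤ ((K:ℝ)+1)^2 := by rw [hN]; nlinarith [norm_nonneg ((K:ℂ)+x)]
    have hN0 : (0:ℝ) < N := by nlinarith
    have heq : x.re * N = (K:ℝ) + x.re := by
      field_simp at hre; linarith [hre]
    have hrel : -‖x‖ ≤ x.re := by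
      have := Complex.abs_re_le_norm x
      rw [abs_le] at this
      linarith [this.1]
    have hxre_pos : 0 < x.re := by
      by_contra h
      push_neg at h
      have h1 : x.re * N ≤ 0 := mul_nonpos_of_nonpos_of_nonneg h hN0.le
      linarith
    rw [div_le_iff₀ (by linarith : (0:ℝ) < 4*(K:ℝ))]
    nlinarith [mul_le_mul_of_nonneg_left hN2 hxre_pos.le]
  · rw [habsx]
    have h1 : (‖(K:ℂ)+x‖)⁻¹ ≤ ((K:ℝ)-1)⁻¹ := inv_anti₀ (by linarith) hlb
    have h2 : ((K:ℝ)-1)⁻¹ ≤ 2/(K:ℝ) := by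
      rw [inv_le_iff_one_le_mul₀ (by linarith)]
      rw [div_mul_eq_mul_div, le_div_iff₀ (by linarith)]
      nlinarith
    linarith

lemma net {K : ℕ} (hK : 200 ≤ K) {x : ℂ}
    (hxre : 1/(4*(K:ℝ)) ≤ x.re) (hxabs : ‖x‖ ≤ 2/(K:ℝ))
    (y : ℂ) (hy : dist y x < 1/(32*(K:ℝ))) :
    ∃ m n : ℤ, 1 ≤ m ∧ (K:ℝ)/100 ≤ ((m:ℂ) + (n:ℂ)*Complex.I).re ∧
      ((m:ℂ) + (n:ℂ)*Complex.I) + x ≠ 0 ∧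
      ‖(((m:ℂ) + (n:ℂ)*Complex.I) + x)⁻¹ - y‖ ≤ 600/(K:ℝ)^2 := by
  have hKr : (200:ℝ) ≤ (K:ℝ) := by exact_mod_cast hK
  have hKpos : (0:ℝ) < K := by linarith
  rw [Complex.dist_eq] at hy
  have hre_sub := Complex.abs_re_le_norm (y - x)
  rw [abs_le] at hre_sub
  have hyx_re : (y - x).re = y.re - x.re := by simp [Complex.sub_re]
  have hyre : 1/(5*(K:ℝ)) ≤ y.re := by
    have h1 : -(1/(32*(K:ℝ))) ≤ y.re - x.re := by
      rw [← hyx_re]; linarith [hre_sub.1]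
    have h2 : 1/(5*(K:ℝ)) + 1/(32*(K:ℝ)) ≤ 1/(4*(K:ℝ)) := by
      rw [div_add_div _ _ (by linarith : (5:ℝ)*K ≠ 0) (by linarith : (32:ℝ)*K ≠ 0),
        div_le_div_iff₀ (by nlinarith) (by linarith)]
      nlinarith
    linarith
  have hyre_pos : 0 < y.re := by
    have := one_div_pos.mpr (by linarith : (0:ℝ) < 5*K)
    linarith
  have hy0 : y ≠ 0 := fun h => by rw [h] at hyre_pos; simp at hyre_pos
  have habsy : ‖y‖ ≤ 3/(K:ℝ) := by
    have h1 : ‖y‖ ≤ ‖x‖ + ‖y - x‖ := by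
      have := norm_add_le x (y - x); simpa using this
    have h2 : 1/(32*(K:ℝ)) ≤ 1/(K:ℝ) := by
      rw [div_le_div_iff₀ (by linarith) (by linarith)]; nlinarith
    have h3 : 2/(K:ℝ) + 1/(K:ℝ) = 3/(K:ℝ) := by ring
    linarith
  have hNy : Complex.normSq y ≤ 9/(K:ℝ)^2 := by
    rw [← Complex.sq_norm]
    have h0 := norm_nonneg y
    have h1 : (‖y‖)^2 ≤ (3/(K:ℝ))^2 := by nlinarith
    have h2 : (3/(K:ℝ))^2 = 9/(K:ℝ)^2 := by ring
    linarith
  have hNy_pos : 0 < Complex.normSq y := by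
    rw [Complex.normSq_pos]; exact hy0
  have hyinv_re : (K:ℝ)/45 ≤ (y⁻¹).re := by
    rw [Complex.inv_re, le_div_iff₀ hNy_pos]
    have h1 : (K:ℝ)/45 * Complex.normSq y ≤ (K:ℝ)/45 * (9/(K:ℝ)^2) :=
      mul_le_mul_of_nonneg_left hNy (by linarith)
    have h2 : (K:ℝ)/45 * (9/(K:ℝ)^2) ≤ 1/(5*(K:ℝ)) := by
      rw [div_mul_div_comm, div_le_div_iff₀ (by positivity) (by linarith)]
      nlinarith
    linarith
  set p : ℂ := y⁻¹ - x with hp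
  have hpre : (K:ℝ)/50 ≤ p.re := by
    have hxre_ub : x.re ≤ 2/(K:ℝ) := le_trans (Complex.re_le_norm x) hxabs
    have h1 : p.re = (y⁻¹).re - x.re := by simp [hp, Complex.sub_re]
    rw [h1]
    have h2 : 2/(K:ℝ) ≤ (K:ℝ)/45 - (K:ℝ)/50 := by
      rw [div_le_iff₀ hKpos]; nlinarith
    linarith
  have hpre1 : (1:ℝ) ≤ p.re := by linarith
  set m : ℤ := ⌊p.re⌋ with hm
  set n : ℤ := ⌊p.im⌋ with hn
  set e : ℂ := (m:ℂ) + (n:ℂ)*Complex.I with he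
  have here : e.re = (m:ℝ) := by simp [he]
  have heim : e.im = (n:ℝ) := by simp [he]
  have hm_le : (m:ℝ) ≤ p.re := Int.floor_le _
  have hm_gt : p.re - 1 < (m:ℝ) := by
    have := Int.sub_one_lt_floor p.re; linarith
  have hn_le : (n:ℝ) ≤ p.im := Int.floor_le _
  have hn_gt : p.im - 1 < (n:ℝ) := by
    have := Int.sub_one_lt_floor p.im; linarith
  have he_re_lb : (K:ℝ)/100 ≤ e.re := by
    rw [here]
    have : (K:ℝ)/50 - 1 ≥ (K:ℝ)/100 := by linarith
    linarith
  have hpe : ‖p - e‖ ≤ 2 := by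
    have h1 := Complex.norm_le_abs_re_add_abs_im (p - e)
    have h2 : (p - e).re = p.re - (m:ℝ) := by simp [Complex.sub_re, here]
    have h3 : (p - e).im = p.im - (n:ℝ) := by simp [Complex.sub_im, heim]
    rw [h2, h3] at h1
    rw [abs_of_nonneg (by linarith), abs_of_nonneg (by linarith)] at h1
    linarith
  have hex_re : (K:ℝ)/100 ≤ (e + x).re := by
    have h1 : (e + x).re = e.re + x.re := by simp [Complex.add_re]
    have h2 : 0 < x.re := by
      have := one_div_pos.mpr (by linarith : (0:ℝ) < 4*K); linarith
    rw [h1]; linarith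
  have hex_ne : e + x ≠ 0 := by
    intro h
    rw [h] at hex_re
    simp at hex_re
    linarith
  have hex_abs : (K:ℝ)/100 ≤ ‖e + x‖ :=
    le_trans hex_re (Complex.re_le_norm _)
  refine ⟨m, n, Int.le_floor.mpr (by exact_mod_cast hpre1), he_re_lb, hex_ne, ?_⟩
  have hid : (e + x)⁻¹ - y = ((p - e) * y) * (e + x)⁻¹ := by
    have hpe' : p - e = y⁻¹ - (e + x) := by rw [hp]; ring
    rw [hpe']
    field_simp
  rw [← he, hid, norm_mul, norm_mul, norm_inv]
  have hinv : (‖e + x‖)⁻¹ ≤ 100/(K:ℝ) := by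
    have h1 : (‖e + x‖)⁻¹ ≤ ((K:ℝ)/100)⁻¹ :=
      inv_anti₀ (by positivity) hex_abs
    rw [inv_div] at h1
    exact h1
  calc ‖p - e‖ * ‖y‖ * (‖e + x‖)⁻¹
      ≤ 2 * (3/(K:ℝ)) * (100/(K:ℝ)) := by
        apply mul_le_mul
        · exact mul_le_mul hpe habsy (norm_nonneg _) (by norm_num)
        · exact hinv
        · exact inv_nonneg.mpr (norm_nonneg _)
        · positivity
    _ = 600/(K:ℝ)^2 := by field_simp; ring


lemma key_not_porous (I : Set ℂ) (hIE : I ⊆ Egauss) (hco : (Egauss \ I).Finite)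
    (A : Set ℂ) (hJA : cfLimitSet I ⊆ A) : ¬ Porous A := by
  rintro ⟨c, ⟨hc0, hc1⟩, r₀, hr₀, hP⟩
  -- bound the excluded digits
  obtain ⟨M₀, hM₀⟩ := hco.isBounded.subset_closedBall 0
  set M : ℝ := max M₀ 0 with hMdef
  have hMF : Egauss \ I ⊆ Metric.closedBall 0 M :=
    hM₀.trans (Metric.closedBall_subset_closedBall (le_max_left _ _))
  have hM0 : (0:ℝ) ≤ M := le_max_right _ _
  -- excluded natural digits are bounded
  have hS : {k : ℕ | (k:ℂ) ∈ Egauss \ I}.Finite := by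
    have : {k : ℕ | (k:ℂ) ∈ Egauss \ I} = (fun k : ℕ => (k:ℂ)) ⁻¹' (Egauss \ I) := rfl
    rw [this]
    exact Set.Finite.preimage (Set.injOn_of_injective Nat.cast_injective) hco
  obtain ⟨K₀, hK₀⟩ := hS.bddAbove
  -- choose a very large natural number K
  obtain ⟨K, hKB⟩ := exists_nat_gt ((K₀:ℝ) + 300*(M+1) + 19200/c + 1/r₀)
  have hcpos : (0:ℝ) < c := hc0
  have hterm1 : (0:ℝ) ≤ (K₀:ℝ) := Nat.cast_nonneg _
  have hterm2 : (300:ℝ) ≤ 300*(M+1) := by nlinarith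
  have hterm3 : (0:ℝ) < 19200/c := by positivity
  have hterm4 : (0:ℝ) < 1/r₀ := by positivity
  have hKge : (300:ℝ) ≤ (K:ℝ) := by linarith
  have hK200 : 200 ≤ K := by exact_mod_cast (by linarith : (200:ℝ) ≤ (K:ℝ))
  have hKr : (200:ℝ) ≤ (K:ℝ) := by exact_mod_cast hK200
  have hKpos : (0:ℝ) < (K:ℝ) := by linarith
  have hKM : 100*(M+1) < (K:ℝ) := by linarith
  have hKc : 19200/c < (K:ℝ) := by linarith
  have hKr₀ : 1/r₀ < (K:ℝ) := by linarith
  have hKgtK₀ : K₀ < K := by exact_mod_cast (by linarith : (K₀:ℝ) < (K:ℝ))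
  -- K is a valid digit
  have hKE : (K:ℂ) ∈ Egauss := by
    refine ⟨(K:ℤ), 0, by exact_mod_cast (by linarith : (1:ℕ) ≤ K), ?_⟩
    push_cast
    ring
  have hKI : (K:ℂ) ∈ I := by
    by_contra h
    have hmem : K ∈ {k : ℕ | (k:ℂ) ∈ Egauss \ I} := ⟨hKE, h⟩
    exact absurd (hK₀ hmem) (not_le.mpr hKgtK₀)
  -- the limit point x of the continued fraction [K; K, K, ...]
  obtain ⟨x, hx⟩ := aK_exists_lim hK200
  have hxJ : x ∈ cfLimitSet I := ⟨fun _ => (K:ℂ), fun _ => hKI, hx⟩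
  have habs1 : ‖x‖ ≤ 1 := by
    have ht : Tendsto (fun m => ‖aK K m‖) atTop (nhds (‖x‖)) :=
      (continuous_norm.tendsto x).comp hx
    exact le_of_tendsto ht (Filter.Eventually.of_forall (aK_norm_le hK200))
  have hKxne : ((K:ℂ) + x) ≠ 0 := K_add_ne hK200 habs1
  have hfix : x = ((K:ℂ) + x)⁻¹ := by
    have t1 : Tendsto (fun m => aK K (m+1)) atTop (nhds x) :=
      hx.comp (tendsto_add_atTop_nat 1)
    have t2 : Tendsto (fun m => ((K:ℂ) + aK K m)⁻¹) atTop (nhds (((K:ℂ) + x)⁻¹)) :=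
      (tendsto_const_nhds.add hx).inv₀ hKxne
    have he : (fun m => aK K (m+1)) = (fun m => ((K:ℂ) + aK K m)⁻¹) :=
      funext (aK_succ K)
    exact tendsto_nhds_unique (he ▸ t1) t2
  obtain ⟨hxre, hxabs⟩ := fixed_pt_bounds hK200 habs1 hfix
  -- the scale r
  set r : ℝ := 1/(32*(K:ℝ)) with hrdef
  have hr_pos : 0 < r := by rw [hrdef]; positivity
  have hr_lt : r < r₀ := by
    rw [hrdef, div_lt_iff₀ (by linarith : (0:ℝ) < 32*(K:ℝ))]
    rw [div_lt_iff₀ hr₀] at hKr₀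
    nlinarith
  -- the limit set is a fine net in the ball around x
  have hnet : ∀ y ∈ Metric.ball x r, ∃ u ∈ cfLimitSet I,
      ‖u - y‖ ≤ 600/(K:ℝ)^2 := by
    intro y hy
    obtain ⟨m, n, hm1, hre, hne, hclose⟩ :=
      net hK200 hxre hxabs y (by rw [Metric.mem_ball, hrdef] at hy; exact hy)
    set e : ℂ := (m:ℂ) + (n:ℂ)*Complex.I with hedef
    have heE : e ∈ Egauss := ⟨m, n, hm1, rfl⟩
    have heI : e ∈ I := by
      by_contra h
      have h2 := hMF ⟨heE, h⟩
      rw [Metric.mem_closedBall, dist_zero_right] at h2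
      have h3 : (K:ℝ)/100 ≤ ‖e‖ := le_trans hre (Complex.re_le_norm e)
      have h4 : M < (K:ℝ)/100 := by linarith
      linarith
    refine ⟨(e + x)⁻¹, ?_, hclose⟩
    set ω : ℕ → ℂ := fun j => if j = 0 then e else (K:ℂ) with hω
    have hωI : ∀ k, ω k ∈ I := by
      intro k
      by_cases h : k = 0 <;> simp [hω, h, heI, hKI]
    have hkey : ∀ mm : ℕ, cfComp ω (mm+1) 0 = (e + aK K mm)⁻¹ := by
      intro mm
      rw [cfComp_succ]
      have h0 : ω 0 = e := rfl
      have h1 : (fun k => ω (k+1)) = (fun _ : ℕ => (K:ℂ)) := by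
        funext k
        simp [hω]
      rw [h0, h1]
      rfl
    refine ⟨ω, hωI, ?_⟩
    have t : Tendsto (fun mm => (e + aK K mm)⁻¹) atTop (nhds ((e + x)⁻¹)) :=
      (tendsto_const_nhds.add hx).inv₀ hne
    rw [← tendsto_add_atTop_iff_nat 1]
    exact (funext hkey) ▸ t
  -- the porosity at x at scale r is small
  have hporle : por A x r ≤ 19200/(K:ℝ) := by
    apply csSup_le
    · exact ⟨0, le_refl 0, x, by rw [zero_mul, Metric.ball_zero]; exact Set.empty_subset _⟩
    · rintro b ⟨hb0, y, hy⟩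
      rcases eq_or_lt_of_le hb0 with h | h
      · rw [← h]; positivity
      · have hbr : 0 < b * r := mul_pos h hr_pos
        have hyball : y ∈ Metric.ball x r := (hy (Metric.mem_ball_self hbr)).1
        obtain ⟨u, huJ, hud⟩ := hnet y hyball
        have huA : u ∈ A := hJA huJ
        have hnotin : u ∉ Metric.ball y (b*r) := fun hin => (hy hin).2 huA
        rw [Metric.mem_ball, Complex.dist_eq, not_lt] at hnotin
        have hble : b * r ≤ 600/(K:ℝ)^2 := le_trans hnotin hud
        have heq : (19200/(K:ℝ)) * r = 600/(K:ℝ)^2 := by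
          rw [hrdef]
          field_simp
          ring
        rw [← mul_le_mul_iff_of_pos_right hr_pos, heq]
        exact hble
  have hporlt : por A x r < c := by
    have : 19200/(K:ℝ) < c := by
      rw [div_lt_iff₀ hcpos] at hKc
      rw [div_lt_iff₀ hKpos]
      linarith
    linarith
  have := hP x (hJA hxJ) r ⟨hr_pos, hr_lt⟩
  linarith


/-- If `I ⊆ E` is co-finite, then the closure of the limit set `J_I`
is not porous in `ℂ`; in particular `J_I` itself is not porous. -/
theorem stmt16 (I : Set ℂ) (hIE : I ⊆ Egauss) (hco : (Egauss \ I).Finite) :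
    ¬ Porous (closure (cfLimitSet I)) ∧ ¬ Porous (cfLimitSet I) := by
  exact ⟨key_not_porous I hIE hco _ subset_closure,
    key_not_porous I hIE hco _ (subset_refl _)⟩
end
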